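/- arXiv:1904.12180 — 7 statements merged into one kernel-verified Lean document; each statement's English description precedes it below -/
import Mathlib

section
/- Let π, π' ∈ S_n, where π has exactly a fixed points and π' has exactly b fixed points on {1,…,n}, and let σ be a uniformly random element of S_n. Then the probability that π and σ⁻¹π'σ have no common fixed point is at most exp(−ab/n). -/
open Equiv Function

section Counting

variable {α : Type*} [Fintype α] [DecidableEq α] (p q : α → Prop)
  [DecidablePred p] [DecidablePred q]

/-- Extend an embedding `{p} ↪ {¬q}` to a permutation of `α`. -/
noncomputable def secPerm (f : {x // p x} ↪ {x // ¬ q x}) : Equiv.Perm α := by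
  classical
  set g : {x // p x} ↪ α := f.trans (Function.Embedding.subtype _) with hg
  have hcard : Fintype.card {x // ¬ p x} = Fintype.card {x // ¬ x ∈ Set.range g} := by
    rw [Fintype.card_subtype_compl, Fintype.card_subtype_compl,
      ← Fintype.card_congr (Equiv.ofInjective g g.injective)]
  exact Equiv.subtypeCongr (q := fun x => x ∈ Set.range g)
    (Equiv.ofInjective g g.injective) (Fintype.equivOfCardEq hcard)

lemma secPerm_spec (f : {x // p x} ↪ {x // ¬ q x}) (x : α) (hx : p x) :
    secPerm p q f x = (f ⟨x, hx⟩ : α) := by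
  classical
  rw [secPerm]
  simp [Equiv.subtypeCongr, hx]

end Counting

section Counting2

variable {α : Type*} [Fintype α] [DecidableEq α] (p q : α → Prop)
  [DecidablePred p] [DecidablePred q]

def Phi (σ : Equiv.Perm α) (hσ : ∀ x, p x → ¬ q (σ x)) : {x // p x} ↪ {x // ¬ q x} :=
  ⟨fun y => ⟨σ y, hσ y y.2⟩, fun y z h =>
    Subtype.ext (σ.injective (congrArg Subtype.val h))⟩

noncomputable def mainEquiv :
    {σ : Equiv.Perm α // ∀ x, p x → ¬ q (σ x)} ≃
      (({x // p x} ↪ {x // ¬ q x}) × {g : Equiv.Perm α // ∀ x, p x → g x = x}) where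
  toFun σ :=
    ⟨Phi p q σ.1 σ.2, (secPerm p q (Phi p q σ.1 σ.2))⁻¹ * σ.1, fun x hx => by
      have h2 : secPerm p q (Phi p q σ.1 σ.2) x = σ.1 x := secPerm_spec p q _ x hx
      simp only [Equiv.Perm.mul_apply]
      rw [← h2]
      exact (secPerm p q (Phi p q σ.1 σ.2)).symm_apply_apply x⟩
  invFun fh :=
    ⟨secPerm p q fh.1 * fh.2.1, fun x hx => by
      simp only [Equiv.Perm.mul_apply]
      rw [fh.2.2 x hx, secPerm_spec p q fh.1 x hx]
      exact (fh.1 ⟨x, hx⟩).2⟩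
  left_inv σ := by
    apply Subtype.ext
    simp [mul_assoc]
  right_inv fh := by
    obtain ⟨f, h, hh⟩ := fh
    dsimp only
    have hf : ∀ prf, Phi p q (secPerm p q f * h) prf = f := fun prf => by
      ext y
      show ((secPerm p q f * h) (y : α) : α) = (f y : α)
      simp only [Equiv.Perm.mul_apply]
      rw [hh y y.2, secPerm_spec p q f y y.2]
    have prf0 : ∀ x, p x → ¬ q ((secPerm p q f * h) x) := fun x hx => by
      simp only [Equiv.Perm.mul_apply]
      rw [hh x hx, secPerm_spec p q f x hx]
      exact (f ⟨x, hx⟩).2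
    refine Prod.ext (hf prf0) (Subtype.ext ?_)
    simp only [hf]
    exact inv_mul_cancel_left _ h

end Counting2

lemma count_lemma {α : Type*} [Fintype α] [DecidableEq α] (p q : α → Prop)
    [DecidablePred p] [DecidablePred q] :
    Nat.card {σ : Equiv.Perm α // ∀ x, p x → ¬ q (σ x)} =
      (Fintype.card {x // ¬ q x}).descFactorial (Fintype.card {x // p x}) *
        (Fintype.card {x // ¬ p x}).factorial := by
  rw [Nat.card_congr (mainEquiv p q), Nat.card_prod]
  congr 1
  · rw [Nat.card_eq_fintype_card, Fintype.card_embedding_eq]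
  · have e : {g : Equiv.Perm α // ∀ x, p x → g x = x} ≃ Equiv.Perm {x // ¬ p x} := by
      refine (Equiv.subtypeEquivRight ?_).trans
        (Equiv.Perm.subtypeEquivSubtypePerm (fun x => ¬ p x)).symm
      intro g
      constructor
      · intro hg x hx; exact hg x (not_not.mp hx)
      · intro hg x hx; exact hg x (not_not_intro hx)
    rw [Nat.card_congr e, Nat.card_eq_fintype_card, Fintype.card_perm]

lemma numeric_bound (n a b : ℕ) (han : a ≤ n) (hbn : b ≤ n) :
    ((n - b).descFactorial a * (n - a).factorial : ℝ) / (n.factorial : ℝ) ≤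
      Real.exp (-((a : ℝ) * (b : ℝ) / (n : ℝ))) := by
  rcases Nat.eq_zero_or_pos n with hn | hn
  · subst hn
    have ha0 : a = 0 := Nat.le_zero.mp han
    have hb0 : b = 0 := Nat.le_zero.mp hbn
    subst ha0; subst hb0
    simp
  -- nontrivial case
  have hnR : (0 : ℝ) < n := by exact_mod_cast hn
  have hD2 : 0 < n.descFactorial a :=
    Nat.pos_of_ne_zero fun h =>
      absurd (Nat.descFactorial_eq_zero_iff_lt.mp h) (not_lt.mpr han)
  have hfact : (n.factorial : ℝ) = (n - a).factorial * n.descFactorial a := by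
    exact_mod_cast (Nat.factorial_mul_descFactorial han).symm
  rw [hfact]
  have hfa : (0 : ℝ) < (n - a).factorial := by exact_mod_cast (n - a).factorial_pos
  have hred : ((n - b).descFactorial a * (n - a).factorial : ℝ) /
      ((n - a).factorial * n.descFactorial a : ℝ) =
      ((n - b).descFactorial a : ℝ) / (n.descFactorial a : ℝ) := by
    field_simp
  rw [hred]
  -- key natural-number inequality
  have hnat : (n - b).descFactorial a * n ^ a ≤ (n - b) ^ a * n.descFactorial a := by
    rw [Nat.descFactorial_eq_prod_range, Nat.descFactorial_eq_prod_range]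
    calc (∏ i ∈ Finset.range a, (n - b - i)) * n ^ a
        = ∏ i ∈ Finset.range a, (n - b - i) * n := by
          rw [Finset.prod_mul_distrib, Finset.prod_const, Finset.card_range]
      _ ≤ ∏ i ∈ Finset.range a, (n - b) * (n - i) := by
          refine Finset.prod_le_prod' fun i _ => ?_
          rw [Nat.sub_mul, Nat.mul_sub]
          exact Nat.sub_le_sub_left (by rw [mul_comm]; exact Nat.mul_le_mul_left i (Nat.sub_le n b)) _
      _ = (n - b) ^ a * ∏ i ∈ Finset.range a, (n - i) := by
          rw [Finset.prod_mul_distrib, Finset.prod_const, Finset.card_range]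
  have hcast : ((n - b : ℕ) : ℝ) = (n : ℝ) - b := by
    exact Nat.cast_sub hbn
  have hstep1 : ((n - b).descFactorial a : ℝ) / (n.descFactorial a : ℝ) ≤
      ((n : ℝ) - b) ^ a / (n : ℝ) ^ a := by
    rw [div_le_div_iff₀ (by exact_mod_cast hD2) (pow_pos hnR a)]
    calc ((n - b).descFactorial a : ℝ) * (n : ℝ) ^ a
        = (((n - b).descFactorial a * n ^ a : ℕ) : ℝ) := by push_cast; ring
      _ ≤ (((n - b) ^ a * n.descFactorial a : ℕ) : ℝ) := by exact_mod_cast hnat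
      _ = ((n : ℝ) - b) ^ a * (n.descFactorial a : ℝ) := by push_cast [hcast]; ring
  refine hstep1.trans ?_
  have hb1 : (b : ℝ) / n ≤ 1 := by
    rw [div_le_one hnR]; exact_mod_cast hbn
  have h0 : (0 : ℝ) ≤ 1 - (b : ℝ) / n := by linarith
  have heq : ((n : ℝ) - b) ^ a / (n : ℝ) ^ a = (1 - (b : ℝ) / n) ^ a := by
    rw [← div_pow]
    congr 1
    field_simp
  rw [heq]
  have hle : 1 - (b : ℝ) / n ≤ Real.exp (-((b : ℝ) / n)) := by
    have := Real.add_one_le_exp (-((b : ℝ) / n))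
    linarith
  calc (1 - (b : ℝ) / n) ^ a ≤ Real.exp (-((b : ℝ) / n)) ^ a := pow_le_pow_left₀ h0 hle a
    _ = Real.exp (a * -((b : ℝ) / n)) := by rw [← Real.exp_nat_mul]
    _ = Real.exp (-((a : ℝ) * b / n)) := by ring_nf

/-- If `π` has `a` fixed points and `π'` has `b` fixed points, then for uniformly random
`σ ∈ S_n` the probability that `π` and `σ⁻¹ π' σ` have no common fixed point is at most
`exp(−ab/n)`. -/
theorem prob_disjoint_fixed_points_le (n : ℕ) (π π' : Equiv.Perm (Fin n)) (a b : ℕ)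
    (ha : Nat.card (Function.fixedPoints ⇑π) = a)
    (hb : Nat.card (Function.fixedPoints ⇑π') = b) :
    (Nat.card {σ : Equiv.Perm (Fin n) //
        Function.fixedPoints ⇑π ∩ Function.fixedPoints ⇑(σ⁻¹ * π' * σ) = ∅} : ℝ) /
      (Nat.card (Equiv.Perm (Fin n)) : ℝ) ≤
    Real.exp (-((a : ℝ) * (b : ℝ) / (n : ℝ))) := by
  classical
  set p : Fin n → Prop := fun x => π x = x with hp
  set q : Fin n → Prop := fun x => π' x = x with hq
  have hA : Fintype.card {x : Fin n // p x} = a := by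
    rw [← Nat.card_eq_fintype_card]; exact ha
  have hB : Fintype.card {x : Fin n // q x} = b := by
    rw [← Nat.card_eq_fintype_card]; exact hb
  have han : a ≤ n := by
    calc a = Fintype.card {x : Fin n // p x} := hA.symm
      _ ≤ Fintype.card (Fin n) := Fintype.card_subtype_le _
      _ = n := Fintype.card_fin n
  have hbn : b ≤ n := by
    calc b = Fintype.card {x : Fin n // q x} := hB.symm
      _ ≤ Fintype.card (Fin n) := Fintype.card_subtype_le _
      _ = n := Fintype.card_fin n
  have hcong : Nat.card {σ : Equiv.Perm (Fin n) //
        Function.fixedPoints ⇑π ∩ Function.fixedPoints ⇑(σ⁻¹ * π' * σ) = ∅} =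
      Nat.card {σ : Equiv.Perm (Fin n) // ∀ x, p x → ¬ q (σ x)} := by
    refine Nat.card_congr (Equiv.subtypeEquivRight fun σ => ?_)
    rw [Set.eq_empty_iff_forall_notMem]
    constructor
    · intro h x hx hqx
      exact h x ⟨hx, by
        show (σ⁻¹ * π' * σ) x = x
        simp only [Equiv.Perm.mul_apply]
        rw [hqx]
        exact σ.symm_apply_apply x⟩
    · intro h x hx
      obtain ⟨h1, h2⟩ := hx
      refine h x h1 ?_
      have h2' : σ⁻¹ (π' (σ x)) = x := h2
      have := congrArg σ h2'
      rwa [← Equiv.Perm.mul_apply, mul_inv_cancel, Equiv.Perm.one_apply] at this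
  rw [hcong, count_lemma p q]
  have hcq : Fintype.card {x : Fin n // ¬ q x} = n - b := by
    rw [Fintype.card_subtype_compl, hB, Fintype.card_fin]
  have hcp : Fintype.card {x : Fin n // ¬ p x} = n - a := by
    rw [Fintype.card_subtype_compl, hA, Fintype.card_fin]
  have hperm : Nat.card (Equiv.Perm (Fin n)) = n.factorial := by
    rw [Nat.card_eq_fintype_card, Fintype.card_perm, Fintype.card_fin]
  rw [hcq, hcp, hA, hperm]
  exact_mod_cast numeric_bound n a b han hbn
end

section
/- Let π, π' ∈ S_n, where π has c cycles and π' has c' cycles in their cycle decompositions (fixed points counted as cycles). If c + c' ≥ n + 2, then the subgroup ⟨π, π'⟩ does not act transitively on {1,…,n}. -/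
variable {α : Type*}

/-- Merge the classes of `a` and `b` in a setoid. -/
def mergeSetoid (s : Setoid α) (a b : α) : Setoid α where
  r x y := s x y ∨ (s x a ∧ s b y) ∨ (s x b ∧ s a y)
  iseqv := by
    constructor
    · intro x; exact Or.inl (s.refl x)
    · rintro x y (h | ⟨h1, h2⟩ | ⟨h1, h2⟩)
      · exact Or.inl (s.symm h)
      · exact Or.inr (Or.inr ⟨s.symm h2, s.symm h1⟩)
      · exact Or.inr (Or.inl ⟨s.symm h2, s.symm h1⟩)
    · rintro x y z (h | ⟨h1, h2⟩ | ⟨h1, h2⟩) (h' | ⟨h1', h2'⟩ | ⟨h1', h2'⟩)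
      · exact Or.inl (s.trans h h')
      · exact Or.inr (Or.inl ⟨s.trans h h1', h2'⟩)
      · exact Or.inr (Or.inr ⟨s.trans h h1', h2'⟩)
      · exact Or.inr (Or.inl ⟨h1, s.trans h2 h'⟩)
      · exact Or.inl (s.trans (s.trans h1 (s.symm (s.trans h2 h1'))) h2')
      · exact Or.inl (s.trans h1 h2')
      · exact Or.inr (Or.inr ⟨h1, s.trans h2 h'⟩)
      · exact Or.inl (s.trans h1 h2')
      · exact Or.inl (s.trans (s.trans h1 (s.symm (s.trans h2 h1'))) h2')

lemma le_mergeSetoid (s : Setoid α) (a b : α) : s ≤ mergeSetoid s a b :=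
  Setoid.le_def.mpr fun hxy => Or.inl hxy

lemma mergeSetoid_rel (s : Setoid α) (a b : α) : mergeSetoid s a b a b :=
  Or.inr (Or.inl ⟨s.refl a, s.refl b⟩)

lemma card_quot_le_of_le [Finite α] {s t : Setoid α} (h : s ≤ t) :
    Nat.card (Quotient t) ≤ Nat.card (Quotient s) := by
  apply Nat.card_le_card_of_surjective (Quotient.map id (fun x y hxy => h hxy))
  intro q
  obtain ⟨x, rfl⟩ := Quotient.exists_rep q
  exact ⟨Quotient.mk s x, rfl⟩

lemma card_quot_lt [Finite α] {s t : Setoid α} (h : s ≤ t) {a b : α}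
    (hab : t a b) (hnab : ¬ s a b) :
    Nat.card (Quotient t) < Nat.card (Quotient s) := by
  classical
  have := Fintype.ofFinite α
  rw [Nat.card_eq_fintype_card, Nat.card_eq_fintype_card]
  apply Fintype.card_lt_of_surjective_not_injective
      (Quotient.map id (fun x y hxy => h hxy))
  · intro q
    obtain ⟨x, rfl⟩ := Quotient.exists_rep q
    exact ⟨Quotient.mk s x, rfl⟩
  · intro hinj
    have : Quotient.mk s a = Quotient.mk s b := by
      apply hinj
      exact Quotient.sound hab
    exact hnab (Quotient.exact this)

lemma card_quot_merge [Finite α] (s : Setoid α) (a b : α) :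
    Nat.card (Quotient s) ≤ Nat.card (Quotient (mergeSetoid s a b)) + 1 := by
  classical
  have := Fintype.ofFinite α
  set t := mergeSetoid s a b
  set f : Quotient s → Quotient t := Quotient.map id (fun x y hxy => le_mergeSetoid s a b hxy) with hf
  have key : ∀ c : Quotient s, c ≠ Quotient.mk s b → ∀ c' : Quotient s, c' ≠ Quotient.mk s b →
      f c = f c' → c = c' := by
    intro c hc c' hc' hfc
    obtain ⟨x, rfl⟩ := Quotient.exists_rep c
    obtain ⟨y, rfl⟩ := Quotient.exists_rep c'
    have : t x y := Quotient.exact hfc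
    rcases this with h | ⟨h1, h2⟩ | ⟨h1, h2⟩
    · exact Quotient.sound h
    · exact absurd (Quotient.sound (s.symm h2)) hc'
    · exact absurd (Quotient.sound h1) hc
  have hinj : Function.Injective
      (fun c : Quotient s => if c = Quotient.mk s b then (none : Option (Quotient t)) else some (f c)) := by
    intro c c' hcc'
    simp only at hcc'
    by_cases hc : c = Quotient.mk s b <;> by_cases hc' : c' = Quotient.mk s b
    · rw [hc, hc']
    · simp [hc, hc'] at hcc'
    · simp [hc, hc'] at hcc'
    · simp only [if_neg hc, if_neg hc', Option.some.injEq] at hcc'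
      exact key c hc c' hc' hcc'
  calc Nat.card (Quotient s) ≤ Nat.card (Option (Quotient t)) :=
        Nat.card_le_card_of_injective _ hinj
    _ = Nat.card (Quotient t) + 1 := by
        rw [Nat.card_eq_fintype_card, Nat.card_eq_fintype_card, Fintype.card_option]

theorem setoid_submodular [Finite α] :
    ∀ (k : ℕ) (r s : Setoid α), Nat.card (Quotient s) ≤ k →
      Nat.card (Quotient r) + Nat.card (Quotient s) ≤
        Nat.card (Quotient (r ⊓ s)) + Nat.card (Quotient (r ⊔ s)) := by
  intro k
  induction k with
  | zero =>
    intro r s hs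
    by_cases hrs : r ≤ s
    · rw [sup_eq_right.mpr hrs, inf_eq_left.mpr hrs]
    · exfalso
      have : ∃ a b : α, r a b ∧ ¬ s a b := by
        by_contra hcon
        push_neg at hcon
        exact hrs (fun {x y} hxy => hcon x y hxy)
      obtain ⟨a, _, _, _⟩ := this
      have : Nonempty (Quotient s) := ⟨Quotient.mk s a⟩
      have := Nat.card_pos (α := Quotient s)
      omega
  | succ k ih =>
    intro r s hs
    by_cases hrs : r ≤ s
    · rw [sup_eq_right.mpr hrs, inf_eq_left.mpr hrs]
    · have : ∃ a b : α, r a b ∧ ¬ s a b := by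
        by_contra hcon
        push_neg at hcon
        exact hrs (fun {x y} hxy => hcon x y hxy)
      obtain ⟨a, b, hab, hnab⟩ := this
      set s' := mergeSetoid s a b with hs'
      have hlt : Nat.card (Quotient s') < Nat.card (Quotient s) :=
        card_quot_lt (le_mergeSetoid s a b) (mergeSetoid_rel s a b) hnab
      have hmerge : Nat.card (Quotient s) ≤ Nat.card (Quotient s') + 1 :=
        card_quot_merge s a b
      have hIH := ih r s' (by omega)
      -- r ⊔ s' = r ⊔ s
      have hsup : r ⊔ s' = r ⊔ s := by
        apply le_antisymm
        · apply sup_le le_sup_left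
          intro x y hxy
          have hr : r ≤ r ⊔ s := le_sup_left
          have hss : s ≤ r ⊔ s := le_sup_right
          rcases hxy with h | ⟨h1, h2⟩ | ⟨h1, h2⟩
          · exact hss h
          · exact (r ⊔ s).trans (hss h1) ((r ⊔ s).trans (hr hab) (hss h2))
          · exact (r ⊔ s).trans (hss h1) ((r ⊔ s).trans ((r ⊔ s).symm (hr hab)) (hss h2))
        · exact sup_le le_sup_left (le_trans (le_mergeSetoid s a b) le_sup_right)
      -- inf drop
      have hinf : Nat.card (Quotient (r ⊓ s')) < Nat.card (Quotient (r ⊓ s)) := by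
        apply card_quot_lt (s := r ⊓ s) (t := r ⊓ s')
        · exact inf_le_inf_left r (le_mergeSetoid s a b)
        · exact ⟨hab, mergeSetoid_rel s a b⟩
        · rintro ⟨-, hsab⟩; exact hnab hsab
      rw [hsup] at hIH
      omega

lemma setoid_card_ineq [Finite α] (r s : Setoid α) :
    Nat.card (Quotient r) + Nat.card (Quotient s) ≤
      Nat.card α + Nat.card (Quotient (r ⊔ s)) := by
  have h1 := setoid_submodular (Nat.card (Quotient s)) r s le_rfl
  have h2 : Nat.card (Quotient (r ⊓ s)) ≤ Nat.card α :=
    Nat.card_le_card_of_surjective (Quotient.mk _) Quotient.mk''_surjective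
  omega

/-- The same-cycle relation of a permutation as a setoid. -/
def sameCycleSetoid {β : Type*} (π : Equiv.Perm β) : Setoid β where
  r := π.SameCycle
  iseqv := ⟨fun _ => Equiv.Perm.SameCycle.refl π _, Equiv.Perm.SameCycle.symm,
    Equiv.Perm.SameCycle.trans⟩

lemma card_quot_sameCycle {β : Type*} [Fintype β] [DecidableEq β] (π : Equiv.Perm β) :
    Nat.card (Quotient (sameCycleSetoid π)) =
      Multiset.card π.cycleType + Nat.card (Function.fixedPoints ⇑π) := by
  classical
  set F : Quotient (sameCycleSetoid π) →
      ({c // c ∈ π.cycleFactorsFinset} ⊕ Function.fixedPoints ⇑π) :=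
    Quotient.lift
      (fun x => if hx : π x = x then Sum.inr ⟨x, hx⟩ else
        Sum.inl ⟨π.cycleOf x, Equiv.Perm.cycleOf_mem_cycleFactorsFinset_iff.mpr
          (Equiv.Perm.mem_support.mpr hx)⟩)
      (by
        intro x y hxy
        by_cases hx : π x = x
        · have hxy2 : x = y := by
            obtain ⟨i, hi⟩ := hxy
            rw [← hi, Equiv.Perm.zpow_apply_eq_self_of_apply_eq_self hx]
          subst hxy2; rfl
        · have hy : ¬ π y = y := by
            intro hy
            obtain ⟨i, hi⟩ := (hxy : π.SameCycle x y).symm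
            rw [Equiv.Perm.zpow_apply_eq_self_of_apply_eq_self hy] at hi
            exact hx (hi ▸ hy)
          simp only [dif_neg hx, dif_neg hy]
          exact congrArg Sum.inl (Subtype.ext (Equiv.Perm.SameCycle.cycleOf_eq hxy))) with hF
  have hbij : Function.Bijective F := by
    constructor
    · intro c c' hcc'
      obtain ⟨x, rfl⟩ := Quotient.exists_rep c
      obtain ⟨y, rfl⟩ := Quotient.exists_rep c'
      simp only [hF, Quotient.lift_mk] at hcc'
      by_cases hx : π x = x <;> by_cases hy : π y = y
      · simp only [dif_pos hx, dif_pos hy, Sum.inr.injEq, Subtype.mk.injEq] at hcc'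
        exact Quotient.sound (by have hxy : x = y := congrArg Subtype.val hcc'; subst hxy; exact Equiv.Perm.SameCycle.refl π x)
      · simp only [dif_pos hx, dif_neg hy] at hcc'; exact absurd hcc' (by simp)
      · simp only [dif_neg hx, dif_pos hy] at hcc'; exact absurd hcc' (by simp)
      · simp only [dif_neg hx, dif_neg hy, Sum.inl.injEq, Subtype.mk.injEq] at hcc'
        apply Quotient.sound
        have hy' : y ∈ (π.cycleOf x).support := by
          rw [hcc', Equiv.Perm.mem_support_cycleOf_iff]
          exact ⟨Equiv.Perm.SameCycle.refl π y, Equiv.Perm.mem_support.mpr hy⟩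
        exact ((Equiv.Perm.mem_support_cycleOf_iff).mp hy').1
    · rintro (⟨c, hc⟩ | ⟨x, hx⟩)
      · have hcyc : c.IsCycle := (Equiv.Perm.mem_cycleFactorsFinset_iff.mp hc).1
        obtain ⟨x, hx1, -⟩ := hcyc
        have hxc : x ∈ c.support := Equiv.Perm.mem_support.mpr hx1
        have hceq : c = π.cycleOf x := Equiv.Perm.cycle_is_cycleOf hxc hc
        have hπx : ¬ π x = x := by
          have := (Equiv.Perm.mem_cycleFactorsFinset_iff.mp hc).2 x hxc
          rw [← this]; exact hx1
        refine ⟨Quotient.mk _ x, ?_⟩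
        simp only [hF, Quotient.lift_mk, dif_neg hπx]
        exact congrArg Sum.inl (Subtype.ext hceq.symm)
      · refine ⟨Quotient.mk _ x, ?_⟩
        simp only [hF, Quotient.lift_mk]
        exact dif_pos hx
  rw [Nat.card_eq_of_bijective F hbij, Nat.card_sum]
  congr 1
  rw [Nat.card_eq_fintype_card, Fintype.card_coe, Equiv.Perm.cycleType]
  simp

/-- The total number of cycles of a permutation of `Fin n`, with fixed points counted as
cycles of length `1`. -/
noncomputable def numCycles {n : ℕ} (π : Equiv.Perm (Fin n)) : ℕ :=
  Multiset.card π.cycleType + Nat.card (Function.fixedPoints ⇑π)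

/-- If `π` has `c` cycles, `π'` has `c'` cycles and `c + c' ≥ n + 2`, then `⟨π, π'⟩` is not
transitive on `{1, …, n}`. -/
theorem not_transitive_of_many_cycles (n : ℕ) (π π' : Equiv.Perm (Fin n))
    (h : n + 2 ≤ numCycles π + numCycles π') :
    ¬ MulAction.IsPretransitive (Subgroup.closure {π, π'}) (Fin n) := by
  classical
  intro htrans
  set r := sameCycleSetoid π with hr
  set s := sameCycleSetoid π' with hs
  have hBr : numCycles π = Nat.card (Quotient r) := (card_quot_sameCycle π).symm
  have hBs : numCycles π' = Nat.card (Quotient s) := (card_quot_sameCycle π').symm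
  -- the subgroup of permutations moving points within `r ⊔ s` classes
  set T : Subgroup (Equiv.Perm (Fin n)) :=
    { carrier := {g | ∀ x, (r ⊔ s) x (g x)}
      one_mem' := fun x => (r ⊔ s).refl x
      mul_mem' := fun {g g'} hg hg' x =>
        (r ⊔ s).trans (hg' x) (by simpa [Equiv.Perm.mul_apply] using hg (g' x))
      inv_mem' := fun {g} hg x => (r ⊔ s).symm (by
        have := hg (g⁻¹ x)
        rwa [← Equiv.Perm.mul_apply, mul_inv_cancel, Equiv.Perm.one_apply] at this) } with hT
  have hsub : Subgroup.closure {π, π'} ≤ T := by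
    rw [Subgroup.closure_le]
    rintro g (rfl | rfl)
    · intro x
      exact Setoid.le_def.mp le_sup_left (⟨1, by simp⟩ : g.SameCycle x (g x))
    · intro x
      exact Setoid.le_def.mp le_sup_right (⟨1, by simp⟩ : g.SameCycle x (g x))
  -- nonemptiness
  have hQr : Nat.card (Quotient r) ≤ n := by
    have := Nat.card_le_card_of_surjective (Quotient.mk r) Quotient.mk''_surjective
    simpa using this
  have hQs : Nat.card (Quotient s) ≤ n := by
    have := Nat.card_le_card_of_surjective (Quotient.mk s) Quotient.mk''_surjective
    simpa using this
  have hn : 0 < n := by omega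
  have : Nonempty (Fin n) := ⟨⟨0, hn⟩⟩
  -- transitivity forces one class
  have htop : r ⊔ s = ⊤ := by
    apply le_antisymm le_top
    apply Setoid.le_def.mpr
    intro x y _
    obtain ⟨g, hg⟩ := htrans.exists_smul_eq x y
    have hgT : (g : Equiv.Perm (Fin n)) ∈ T := hsub g.2
    have := hgT x
    rwa [show (g : Equiv.Perm (Fin n)) x = y from hg] at this
  have hone : Nat.card (Quotient (r ⊔ s)) = 1 := by
    rw [htop]
    have : Subsingleton (Quotient (⊤ : Setoid (Fin n))) := by
      constructor
      intro a b
      induction a using Quotient.inductionOn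
      induction b using Quotient.inductionOn
      exact Quotient.sound trivial
    obtain ⟨x⟩ := (inferInstance : Nonempty (Fin n))
    exact Nat.card_eq_one_iff_unique.mpr ⟨this, ⟨Quotient.mk _ x⟩⟩
  have hmain := setoid_card_ineq r s
  have hfin : Nat.card (Fin n) = n := by simp
  omega
end

section
/- For every positive integer k, the number of ordered pairs (σ, σ') of permutations of a set of size 2k, such that both σ and σ' have cycle type 2^k (i.e., each is a product of k disjoint transpositions with no fixed points) and the subgroup ⟨σ, σ'⟩ acts transitively on the 2k points, is exactly (2k)!/(2k) = (2k−1)!. -/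
open Equiv Equiv.Perm

lemma aux_cycleType_iff {k : ℕ} (hk : 0 < k) (σ : Perm (Fin (2 * k))) :
    σ.cycleType = Multiset.replicate k 2 ↔ (σ * σ = 1 ∧ ∀ x, σ x ≠ x) := by
  constructor
  · intro h
    constructor
    · have hdvd : orderOf σ ∣ 2 := by
        rw [← Equiv.Perm.lcm_cycleType, h]
        exact Multiset.lcm_dvd.mpr (fun n hn => by rw [Multiset.eq_of_mem_replicate hn])
      have := orderOf_dvd_iff_pow_eq_one.mp hdvd
      rwa [sq] at this
    · intro x hx
      have hsum : σ.cycleType.sum = σ.support.card := Equiv.Perm.sum_cycleType σ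
      rw [h, Multiset.sum_replicate, smul_eq_mul] at hsum
      have hcard : σ.support.card = Fintype.card (Fin (2 * k)) := by
        simp at hsum ⊢; omega
      have huniv : σ.support = Finset.univ := Finset.eq_univ_of_card _ hcard
      have : x ∈ σ.support := huniv ▸ Finset.mem_univ x
      exact (Equiv.Perm.mem_support.mp this) hx
  · rintro ⟨h2, hf⟩
    have hsupp : σ.support = Finset.univ := by
      ext x; simp [Equiv.Perm.mem_support, hf x]
    have hsum : σ.cycleType.sum = 2 * k := by
      rw [Equiv.Perm.sum_cycleType, hsupp]; simp
    have hmem : ∀ n ∈ σ.cycleType, n = 2 := by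
      intro n hn
      have h1 : 2 ≤ n := Equiv.Perm.two_le_of_mem_cycleType hn
      have hdvd : n ∣ 2 := by
        have hn2 : n ∣ σ.cycleType.lcm := Multiset.dvd_lcm hn
        rw [Equiv.Perm.lcm_cycleType] at hn2
        exact hn2.trans (orderOf_dvd_of_pow_eq_one (by rwa [sq]))
      have := Nat.le_of_dvd (by omega) hdvd; omega
    have hrep : σ.cycleType = Multiset.replicate (Multiset.card σ.cycleType) 2 :=
      Multiset.eq_replicate_card.mpr hmem
    have hcardct : Multiset.card σ.cycleType = k := by
      rw [hrep, Multiset.sum_replicate, smul_eq_mul] at hsum; omega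
    rw [hrep, hcardct]

section Seq
variable {k : ℕ} [NeZero (2 * k)]

/-- the alternating walk: `0, σ 0, σ' σ 0, σ σ' σ 0, ...` -/
def permSeq (σ σ' : Perm (Fin (2 * k))) : ℕ → Fin (2 * k)
  | 0 => 0
  | n + 1 => if n % 2 = 0 then σ (permSeq σ σ' n) else σ' (permSeq σ σ' n)

variable (σ σ' : Perm (Fin (2 * k)))

lemma permSeq_succ (n : ℕ) :
    permSeq σ σ' (n + 1) = if n % 2 = 0 then σ (permSeq σ σ' n) else σ' (permSeq σ σ' n) := rfl

variable {σ σ'}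

omit [NeZero (2 * k)] in
lemma invol_apply (h2 : σ * σ = 1) (x : Fin (2 * k)) : σ (σ x) = x := by
  have := congrArg (fun g => g x) h2; simpa [Equiv.Perm.mul_apply] using this

lemma permSeq_two_mul (i : ℕ) : permSeq σ σ' (2 * i) = ((σ' * σ) ^ i) 0 := by
  induction i with
  | zero => simp [permSeq]
  | succ i ih =>
    have e1 : 2 * (i + 1) = (2 * i + 1) + 1 := by ring
    rw [e1, permSeq_succ, permSeq_succ]
    simp only [Nat.mul_mod_right, Nat.add_mul_mod_self_left]
    rw [if_neg (by omega), ih, pow_succ']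
    simp [Equiv.Perm.mul_apply]

lemma permSeq_exists_period : ∃ p, 0 < p ∧ p % 2 = 0 ∧ permSeq σ σ' p = 0 := by
  refine ⟨2 * orderOf (σ' * σ), by have := orderOf_pos (σ' * σ); omega, by omega, ?_⟩
  rw [permSeq_two_mul, pow_orderOf_eq_one]; rfl

/-- if `p` is an even period returning to `0`, the sequence is `p`-periodic -/
lemma permSeq_periodic {p : ℕ} (hp2 : p % 2 = 0) (hp0 : permSeq σ σ' p = 0) (n : ℕ) :
    permSeq σ σ' (n + p) = permSeq σ σ' n := by
  induction n with
  | zero => simpa [permSeq] using hp0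
  | succ n ih =>
    have e : n + 1 + p = (n + p) + 1 := by ring
    rw [e, permSeq_succ, permSeq_succ, ih]
    have e2 : (n + p) % 2 = n % 2 := by omega
    rw [e2]

lemma permSeq_mod {p : ℕ} (hp : 0 < p) (hp2 : p % 2 = 0) (hp0 : permSeq σ σ' p = 0) (n : ℕ) :
    permSeq σ σ' n = permSeq σ σ' (n % p) := by
  induction n using Nat.strong_induction_on with
  | _ n ih =>
    rcases lt_or_ge n p with h | h
    · rw [Nat.mod_eq_of_lt h]
    · have e : n = (n - p) + p := by omega
      conv_lhs => rw [e]
      rw [permSeq_periodic hp2 hp0, ih (n - p) (by omega)]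
      have e3 : (n - p) % p = n % p := by
        conv_rhs => rw [e]
        rw [Nat.add_mod_right]
      rw [e3]
end Seq

section Seq2
variable {k : ℕ} [NeZero (2 * k)]
variable {σ σ' : Perm (Fin (2 * k))}

lemma permSeq_sigma_mem (h2 : σ * σ = 1) (n : ℕ) :
    ∃ m, σ (permSeq σ σ' n) = permSeq σ σ' m := by
  rcases Nat.even_or_odd n with he | ho
  · rw [Nat.even_iff] at he
    exact ⟨n + 1, by rw [permSeq_succ, if_pos he]⟩
  · rw [Nat.odd_iff] at ho
    obtain ⟨t, ht1, ht2⟩ : ∃ t, n = t + 1 ∧ t % 2 = 0 := ⟨n - 1, by omega, by omega⟩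
    refine ⟨t, ?_⟩
    rw [ht1, permSeq_succ, if_pos ht2, invol_apply h2]

lemma permSeq_sigma'_mem {p : ℕ} (hp : 0 < p) (hp2 : p % 2 = 0) (hp0 : permSeq σ σ' p = 0)
    (h2' : σ' * σ' = 1) (n : ℕ) :
    ∃ m, σ' (permSeq σ σ' n) = permSeq σ σ' m := by
  rcases Nat.even_or_odd n with he | ho
  · rw [Nat.even_iff] at he
    obtain ⟨t, ht1, ht2⟩ : ∃ t, n + p = t + 1 ∧ t % 2 = 1 := ⟨n + p - 1, by omega, by omega⟩
    refine ⟨t, ?_⟩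
    have hper := permSeq_periodic (σ := σ) (σ' := σ') hp2 hp0 n
    rw [← hper, ht1, permSeq_succ, if_neg (by omega), invol_apply h2']
  · rw [Nat.odd_iff] at ho
    exact ⟨n + 1, by rw [permSeq_succ, if_neg (by omega)]⟩

lemma permSeq_surjective {p : ℕ} (hp : 0 < p) (hp2 : p % 2 = 0) (hp0 : permSeq σ σ' p = 0)
    (h2 : σ * σ = 1) (h2' : σ' * σ' = 1)
    (htrans : MulAction.IsPretransitive (Subgroup.closure {σ, σ'}) (Fin (2 * k)))
    (x : Fin (2 * k)) : ∃ n < p, permSeq σ σ' n = x := by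
  have hinv : ∀ g ∈ Subgroup.closure ({σ, σ'} : Set (Perm (Fin (2 * k)))),
      ∀ y, (∃ n, permSeq σ σ' n = y) →
        (∃ n, permSeq σ σ' n = g y) ∧ (∃ n, permSeq σ σ' n = g⁻¹ y) := by
    intro g hg
    induction hg using Subgroup.closure_induction with
    | mem u hu =>
      intro y hy
      obtain ⟨n, rfl⟩ := hy
      rcases hu with rfl | rfl
      · have hinv : u⁻¹ = u := inv_eq_of_mul_eq_one_left h2
        obtain ⟨m, hm⟩ := permSeq_sigma_mem (σ' := σ') h2 n
        exact ⟨⟨m, hm.symm⟩, by rw [hinv]; exact ⟨m, hm.symm⟩⟩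
      · have hinv : u⁻¹ = u := inv_eq_of_mul_eq_one_left h2'
        obtain ⟨m, hm⟩ := permSeq_sigma'_mem hp hp2 hp0 h2' n
        exact ⟨⟨m, hm.symm⟩, by rw [hinv]; exact ⟨m, hm.symm⟩⟩
    | one => intro y hy; exact ⟨by simpa using hy, by simpa using hy⟩
    | mul u v hu hv ihu ihv =>
      intro y hy
      constructor
      · have h1 := (ihv y hy).1
        have h2 := (ihu (v y) h1).1
        simpa [Equiv.Perm.mul_apply] using h2
      · have h1 := (ihu y hy).2
        have h2 := (ihv (u⁻¹ y) h1).2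
        simpa [Equiv.Perm.mul_apply] using h2
    | inv u hu ihu =>
      intro y hy
      refine ⟨(ihu y hy).2, ?_⟩
      simpa using (ihu y hy).1
  obtain ⟨g, hg⟩ := htrans.exists_smul_eq (0 : Fin (2 * k)) x
  have h0 : ∃ n, permSeq σ σ' n = (0 : Fin (2 * k)) := ⟨0, rfl⟩
  obtain ⟨n, hn⟩ := (hinv g.1 g.2 0 h0).1
  have hx : permSeq σ σ' n = x := by
    rw [hn]
    exact hg
  exact ⟨n % p, Nat.mod_lt _ hp, by rw [← permSeq_mod hp hp2 hp0, hx]⟩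
end Seq2

section Seq3
variable {k : ℕ} [NeZero (2 * k)]
variable {σ σ' : Perm (Fin (2 * k))}

lemma permSeq_fwd {a b : ℕ} (hpar : a % 2 = b % 2) (heq : permSeq σ σ' a = permSeq σ σ' b)
    (t : ℕ) : permSeq σ σ' (a + t) = permSeq σ σ' (b + t) := by
  induction t with
  | zero => simpa using heq
  | succ t ih =>
    have e1 : a + (t + 1) = (a + t) + 1 := by ring
    have e2 : b + (t + 1) = (b + t) + 1 := by ring
    rw [e1, e2, permSeq_succ, permSeq_succ, ih]
    have : (a + t) % 2 = (b + t) % 2 := by omega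
    rw [this]

lemma permSeq_bwd (h2 : σ * σ = 1) (h2' : σ' * σ' = 1) {a b : ℕ} (hab : a < b)
    (hpar : a % 2 ≠ b % 2) (heq : permSeq σ σ' a = permSeq σ σ' b) :
    ∀ t, t ≤ b - a → permSeq σ σ' (a + t) = permSeq σ σ' (b - t) := by
  intro t
  induction t with
  | zero => simpa using heq
  | succ t ih =>
    intro ht
    have iht := ih (by omega)
    have hparsum : (a + t) % 2 ≠ (b - t) % 2 := by omega
    rcases Nat.eq_zero_or_pos ((a + t) % 2) with hat | hat
    · -- a+t even, b-t odd, so b-t-1 even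
      have hbt : (b - t) % 2 = 1 := by omega
      have e1 : b - t = (b - (t+1)) + 1 := by omega
      have e2 : (b - (t+1)) % 2 = 0 := by omega
      have : permSeq σ σ' (b - t) = σ (permSeq σ σ' (b - (t+1))) := by
        rw [e1, permSeq_succ, if_pos e2]
      have e0 : a + (t + 1) = (a + t) + 1 := by ring
      rw [e0, permSeq_succ, if_pos hat, iht, this, invol_apply h2]
    · have hat1 : (a + t) % 2 = 1 := by omega
      have e1 : b - t = (b - (t+1)) + 1 := by omega
      have e2 : ¬ (b - (t+1)) % 2 = 0 := by omega
      have : permSeq σ σ' (b - t) = σ' (permSeq σ σ' (b - (t+1))) := by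
        rw [e1, permSeq_succ, if_neg e2]
      have e0 : a + (t + 1) = (a + t) + 1 := by ring
      rw [e0, permSeq_succ, if_neg (by omega), iht, this, invol_apply h2']

lemma permSeq_injOn {p : ℕ} (hp : 0 < p) (hp2 : p % 2 = 0) (hp0 : permSeq σ σ' p = 0)
    (hmin : ∀ q, 0 < q → q % 2 = 0 → permSeq σ σ' q = 0 → p ≤ q)
    (h2 : σ * σ = 1) (h2' : σ' * σ' = 1)
    (hf : ∀ x, σ x ≠ x) (hf' : ∀ x, σ' x ≠ x) :
    ∀ a b, a < b → b < p → permSeq σ σ' a ≠ permSeq σ σ' b := by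
  intro a b hab hbp heq
  rcases eq_or_ne (a % 2) (b % 2) with hpar | hpar
  · have h1 := permSeq_fwd hpar heq (p - b)
    have e1 : b + (p - b) = p := by omega
    rw [e1, hp0] at h1
    have hq := hmin (a + (p - b)) (by omega) (by omega) h1
    omega
  · obtain ⟨t0, ht0⟩ : ∃ t0, b - a = 2 * t0 + 1 := ⟨(b - a - 1) / 2, by omega⟩
    have h1 := permSeq_bwd h2 h2' hab hpar heq t0 (by omega)
    have e1 : b - t0 = (a + t0) + 1 := by omega
    rw [e1, permSeq_succ] at h1
    rcases Nat.eq_zero_or_pos ((a + t0) % 2) with hat | hat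
    · rw [if_pos hat] at h1
      exact hf _ h1.symm
    · rw [if_neg (by omega)] at h1
      exact hf' _ h1.symm
end Seq3

section Tau
variable {k : ℕ} [NeZero (2 * k)]

def tauV (v : ℕ) : ℕ := if v % 2 = 0 then v + 1 else v - 1

def tau'V (k : ℕ) (v : ℕ) : ℕ :=
  if v % 2 = 0 then (if v = 0 then 2 * k - 1 else v - 1)
  else (if v = 2 * k - 1 then 0 else v + 1)

lemma hk2 : 0 < 2 * k := Nat.pos_of_ne_zero (NeZero.ne _)

/-- base matching: swaps 2i and 2i+1 -/
def tauF (x : Fin (2 * k)) : Fin (2 * k) := ⟨tauV x.val % (2 * k), Nat.mod_lt _ hk2⟩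

lemma tauF_val (x : Fin (2 * k)) : (tauF x).val = tauV x.val := by
  have hx := x.isLt
  simp only [tauF]
  rw [Nat.mod_eq_of_lt]
  simp only [tauV]; split_ifs <;> omega

/-- base matching: swaps 2i+1 and 2i+2 (mod 2k) -/
def tau'F (x : Fin (2 * k)) : Fin (2 * k) := ⟨tau'V (2*k/2) x.val % (2 * k), Nat.mod_lt _ hk2⟩

lemma tau'F_val (x : Fin (2 * k)) : (tau'F x).val = tau'V k x.val := by
  have hx := x.isLt
  have hkk : 2 * k / 2 = k := by omega
  simp only [tau'F, hkk]
  rw [Nat.mod_eq_of_lt]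
  simp only [tau'V]; split_ifs <;> omega

lemma tauF_involutive : Function.Involutive (tauF (k := k)) := by
  intro x
  have hx := x.isLt
  apply Fin.ext
  rw [tauF_val, tauF_val]
  simp only [tauV]
  split_ifs <;> omega

def tauP : Perm (Fin (2 * k)) := Function.Involutive.toPerm _ tauF_involutive

lemma tauP_val (x : Fin (2 * k)) : (tauP x).val = tauV x.val := tauF_val x

lemma tau'F_involutive : Function.Involutive (tau'F (k := k)) := by
  intro x
  have hx := x.isLt
  have hkp := hk2 (k := k)
  apply Fin.ext
  rw [tau'F_val, tau'F_val]
  simp only [tau'V]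
  by_cases h : x.val % 2 = 0
  · by_cases h0 : x.val = 0
    · split_ifs <;> omega
    · split_ifs <;> omega
  · by_cases h1 : x.val = 2 * k - 1
    · split_ifs <;> omega
    · split_ifs
      · contradiction
      all_goals omega

def tau'P : Perm (Fin (2 * k)) := Function.Involutive.toPerm _ tau'F_involutive

lemma tau'P_val (x : Fin (2 * k)) : (tau'P x).val = tau'V k x.val := tau'F_val x

lemma tauP_mul_self : (tauP (k := k)) * tauP = 1 := by
  ext x
  simp [Equiv.Perm.mul_apply, tauP, tauF_involutive x]

lemma tau'P_mul_self : (tau'P (k := k)) * tau'P = 1 := by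
  ext x
  simp [Equiv.Perm.mul_apply, tau'P, tau'F_involutive x]

lemma tauP_fpf (x : Fin (2 * k)) : tauP x ≠ x := by
  have hx := x.isLt
  intro h
  have := congrArg Fin.val h
  rw [tauP_val] at this
  simp only [tauV] at this
  split_ifs at this <;> omega

lemma tau'P_fpf (x : Fin (2 * k)) : tau'P x ≠ x := by
  have hx := x.isLt
  have hkp := hk2 (k := k)
  intro h
  have := congrArg Fin.val h
  rw [tau'P_val] at this
  simp only [tau'V] at this
  split_ifs at this <;> omega

lemma tau_orbit (m : ℕ) (hm : m < 2 * k) :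
    ∃ g ∈ Subgroup.closure ({tauP, tau'P} : Set (Perm (Fin (2 * k)))),
      g 0 = ⟨m, hm⟩ := by
  have hkp := hk2 (k := k)
  induction m with
  | zero =>
    refine ⟨1, Subgroup.one_mem _, ?_⟩
    apply Fin.ext
    simp [Fin.val_zero]
  | succ m ih =>
    obtain ⟨g, hg, hg0⟩ := ih (by omega)
    rcases Nat.eq_zero_or_pos (m % 2) with hpar | hpar
    · refine ⟨tauP * g, Subgroup.mul_mem _ (Subgroup.subset_closure (by simp)) hg, ?_⟩
      rw [Equiv.Perm.mul_apply, hg0]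
      apply Fin.ext
      rw [tauP_val]
      simp only [tauV]
      split_ifs <;> simp_all
    · refine ⟨tau'P * g, Subgroup.mul_mem _ (Subgroup.subset_closure (by simp)) hg, ?_⟩
      rw [Equiv.Perm.mul_apply, hg0]
      apply Fin.ext
      rw [tau'P_val]
      simp only [tau'V]
      split_ifs <;> simp_all <;> omega

lemma tau_transitive :
    MulAction.IsPretransitive (Subgroup.closure ({tauP, tau'P} : Set (Perm (Fin (2 * k)))))
      (Fin (2 * k)) := by
  constructor
  intro x y
  obtain ⟨gx, hgx, hgx0⟩ := tau_orbit x.val x.isLt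
  obtain ⟨gy, hgy, hgy0⟩ := tau_orbit y.val y.isLt
  refine ⟨⟨gy * gx⁻¹, Subgroup.mul_mem _ hgy (Subgroup.inv_mem _ hgx)⟩, ?_⟩
  show (gy * gx⁻¹) x = y
  rw [Equiv.Perm.mul_apply]
  have hx : gx⁻¹ x = 0 := by
    apply_fun gx
    simp only [← Equiv.Perm.mul_apply, mul_inv_cancel, Equiv.Perm.one_apply]
    rw [hgx0]
  rw [hx, hgy0]
end Tau

section Main
variable {k : ℕ} [NeZero (2 * k)]
variable {σ σ' : Perm (Fin (2 * k))}

lemma mkE_exists (h2 : σ * σ = 1) (h2' : σ' * σ' = 1)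
    (hf : ∀ x, σ x ≠ x) (hf' : ∀ x, σ' x ≠ x)
    (htrans : MulAction.IsPretransitive (Subgroup.closure {σ, σ'}) (Fin (2 * k))) :
    ∃ e : Perm (Fin (2 * k)), (∀ j : Fin (2 * k), e j = permSeq σ σ' j.val) ∧
      permSeq σ σ' (2 * k) = 0 := by
  have hex := permSeq_exists_period (σ := σ) (σ' := σ')
  obtain ⟨hp, hp2, hp0⟩ := Nat.find_spec hex
  have hmin : ∀ q, 0 < q → q % 2 = 0 → permSeq σ σ' q = 0 → Nat.find hex ≤ q := by
    intro q h1 h2 h3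
    exact Nat.find_min' hex ⟨h1, h2, h3⟩
  have hinj := permSeq_injOn hp hp2 hp0 hmin h2 h2' hf hf'
  have hsurj := permSeq_surjective hp hp2 hp0 h2 h2' htrans
  -- p = 2 * k
  have hple : Nat.find hex ≤ 2 * k := by
    have : Function.Injective (fun j : Fin (Nat.find hex) => permSeq σ σ' j.val) := by
      intro a b hab
      by_contra hne
      rcases Nat.lt_or_ge a.val b.val with h | h
      · exact hinj a.val b.val h b.isLt hab
      · have h' : b.val < a.val := by
          rcases Nat.lt_or_ge b.val a.val with h'' | h''
          · exact h''
          · exact absurd (Fin.ext (by omega : a.val = b.val)) hne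
        exact hinj b.val a.val h' a.isLt hab.symm
    simpa using Fintype.card_le_of_injective _ this
  have hpge : 2 * k ≤ Nat.find hex := by
    have : Function.Surjective (fun j : Fin (Nat.find hex) => permSeq σ σ' j.val) := by
      intro x
      obtain ⟨n, hn, hnx⟩ := hsurj x
      exact ⟨⟨n, hn⟩, hnx⟩
    simpa using Fintype.card_le_of_surjective _ this
  have hpk : Nat.find hex = 2 * k := le_antisymm hple hpge
  have hbij : Function.Bijective (fun j : Fin (2 * k) => permSeq σ σ' j.val) := by
    rw [Fintype.bijective_iff_injective_and_card]
    refine ⟨?_, rfl⟩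
    intro a b hab
    by_contra hne
    rcases Nat.lt_or_ge a.val b.val with h | h
    · exact hinj a.val b.val h (by omega) hab
    · have h' : b.val < a.val := by
        rcases Nat.lt_or_ge b.val a.val with h'' | h''
        · exact h''
        · exact absurd (Fin.ext (by omega : a.val = b.val)) hne
      exact hinj b.val a.val h' (by omega) hab.symm
  refine ⟨Equiv.ofBijective _ hbij, fun j => rfl, ?_⟩
  rw [hpk] at hp0
  exact hp0

lemma conj_rel (h2 : σ * σ = 1) (h2' : σ' * σ' = 1)
    (hper : permSeq σ σ' (2 * k) = 0)
    (e : Perm (Fin (2 * k))) (he : ∀ j : Fin (2 * k), e j = permSeq σ σ' j.val) :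
    σ * e = e * tauP ∧ σ' * e = e * tau'P := by
  have hkp : 0 < 2 * k := Nat.pos_of_ne_zero (NeZero.ne _)
  constructor
  · apply Equiv.ext; intro j
    rw [Equiv.Perm.mul_apply, Equiv.Perm.mul_apply, he j, he (tauP j)]
    have hval : (tauP j).val = tauV j.val := tauP_val j
    rw [hval]
    have hj := j.isLt
    simp only [tauV]
    by_cases h : j.val % 2 = 0
    · rw [if_pos h]
      rw [permSeq_succ, if_pos h]
    · rw [if_neg h]
      have e1 : j.val = (j.val - 1) + 1 := by omega
      conv_lhs => rw [e1]
      rw [permSeq_succ, if_pos (by omega), invol_apply h2]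
  · apply Equiv.ext; intro j
    rw [Equiv.Perm.mul_apply, Equiv.Perm.mul_apply, he j, he (tau'P j)]
    have hval : (tau'P j).val = tau'V k j.val := tau'P_val j
    rw [hval]
    have hj := j.isLt
    have hstep := permSeq_succ σ σ' (2 * k - 1)
    rw [if_neg (by omega)] at hstep
    rw [show 2 * k - 1 + 1 = 2 * k by omega] at hstep
    rw [hstep] at hper
    -- hper : σ' (permSeq σ σ' (2 * k - 1)) = 0
    simp only [tau'V]
    by_cases h : j.val % 2 = 0
    · rw [if_pos h]
      by_cases h0 : j.val = 0
      · rw [if_pos h0, h0]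
        have h3 : permSeq σ σ' 0 = σ' (permSeq σ σ' (2 * k - 1)) := by
          rw [hper]; rfl
        rw [h3, invol_apply h2']
      · rw [if_neg h0]
        have e1 : j.val = (j.val - 1) + 1 := by omega
        conv_lhs => rw [e1]
        rw [permSeq_succ, if_neg (by omega), invol_apply h2']
    · rw [if_neg h]
      by_cases h1 : j.val = 2 * k - 1
      · rw [if_pos h1, h1, hper]
        rfl
      · rw [if_neg h1]
        rw [permSeq_succ, if_neg h]

lemma seq_of_conj (e : Perm (Fin (2 * k))) (he0 : e 0 = 0) (m : ℕ) (hm : m < 2 * k) :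
    permSeq (e * tauP * e⁻¹) (e * tau'P * e⁻¹) m = e ⟨m, hm⟩ := by
  have hkp : 0 < 2 * k := Nat.pos_of_ne_zero (NeZero.ne _)
  induction m with
  | zero =>
    have : (⟨0, hm⟩ : Fin (2 * k)) = 0 := by apply Fin.ext; simp
    rw [this, he0]
    rfl
  | succ m ih =>
    rw [permSeq_succ, ih (by omega)]
    have happ : ∀ (g : Perm (Fin (2 * k))) (x), (e * g * e⁻¹) (e x) = e (g x) := by
      intro g x
      simp [Equiv.Perm.mul_apply]
    by_cases h : m % 2 = 0
    · rw [if_pos h, happ]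
      congr 1
      apply Fin.ext
      rw [tauP_val]
      simp only [tauV]
      rw [if_pos h]
    · rw [if_neg h, happ]
      congr 1
      apply Fin.ext
      rw [tau'P_val]
      simp only [tau'V]
      rw [if_neg h, if_neg (by omega)]
end Main

section Count
variable {k : ℕ} [NeZero (2 * k)]

lemma card_fix_zero :
    Nat.card {e : Perm (Fin (2 * k)) // e 0 = 0} = Nat.factorial (2 * k - 1) := by
  classical
  have hkp : 0 < 2 * k := Nat.pos_of_ne_zero (NeZero.ne _)
  have hsub : Nat.card {e : Perm (Fin (2 * k)) // e 0 = 0} =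
      Nat.card (MulAction.stabilizer (Perm (Fin (2 * k))) (0 : Fin (2 * k))) := by
    apply Nat.card_congr
    exact Equiv.subtypeEquivRight (fun e => by
      simp [MulAction.mem_stabilizer_iff, Equiv.Perm.smul_def])
  rw [hsub]
  have horb : MulAction.orbit (Perm (Fin (2 * k))) (0 : Fin (2 * k)) = Set.univ := by
    ext x
    simp only [Set.mem_univ, iff_true]
    exact ⟨Equiv.swap 0 x, by simp [Equiv.Perm.smul_def, Equiv.swap_apply_left]⟩
  have hos := MulAction.card_orbit_mul_card_stabilizer_eq_card_group
    (Perm (Fin (2 * k))) (0 : Fin (2 * k))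
  have hcardorb : Fintype.card (MulAction.orbit (Perm (Fin (2 * k))) (0 : Fin (2 * k)))
      = 2 * k := by
    rw [← Nat.card_eq_fintype_card,
      Nat.card_congr ((Equiv.setCongr horb).trans (Equiv.Set.univ _))]
    simp [Nat.card_eq_fintype_card]
  rw [hcardorb, Fintype.card_perm, Fintype.card_fin] at hos
  have hfact : (2 * k).factorial = (2 * k) * (2 * k - 1).factorial := by
    conv_lhs => rw [show 2 * k = (2 * k - 1) + 1 by omega]
    rw [Nat.factorial_succ]
    congr 1
    omega
  rw [hfact] at hos
  rw [Nat.card_eq_fintype_card]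
  exact Nat.eq_of_mul_eq_mul_left hkp hos
end Count


lemma conj_good {k : ℕ} [NeZero (2 * k)] (e : Perm (Fin (2 * k))) (he0 : e 0 = 0) :
    (e * tauP * e⁻¹) * (e * tauP * e⁻¹) = 1 ∧
    (e * tau'P * e⁻¹) * (e * tau'P * e⁻¹) = 1 ∧
    (∀ x : Fin (2 * k), (e * tauP * e⁻¹ : Perm (Fin (2 * k))) x ≠ x) ∧
    (∀ x : Fin (2 * k), (e * tau'P * e⁻¹ : Perm (Fin (2 * k))) x ≠ x) ∧
    MulAction.IsPretransitive
      (Subgroup.closure {e * tauP * e⁻¹, e * tau'P * e⁻¹}) (Fin (2 * k)) ∧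
    (∀ j : Fin (2 * k), e j = permSeq (e * tauP * e⁻¹) (e * tau'P * e⁻¹) j.val) := by
  have h2 : (e * tauP * e⁻¹) * (e * tauP * e⁻¹) = 1 := by
    have h : e * tauP * e⁻¹ * (e * tauP * e⁻¹) = e * (tauP * tauP) * e⁻¹ := by group
    rw [h, tauP_mul_self]
    group
  have h2' : (e * tau'P * e⁻¹) * (e * tau'P * e⁻¹) = 1 := by
    have h : e * tau'P * e⁻¹ * (e * tau'P * e⁻¹) = e * (tau'P * tau'P) * e⁻¹ := by group
    rw [h, tau'P_mul_self]
    group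
  have hf : ∀ x : Fin (2 * k), (e * tauP * e⁻¹ : Perm (Fin (2 * k))) x ≠ x := by
    intro x hx
    simp only [Equiv.Perm.mul_apply] at hx
    have h : tauP (e⁻¹ x) = e⁻¹ x := by
      apply_fun e
      simpa using hx
    exact tauP_fpf _ h
  have hf' : ∀ x : Fin (2 * k), (e * tau'P * e⁻¹ : Perm (Fin (2 * k))) x ≠ x := by
    intro x hx
    simp only [Equiv.Perm.mul_apply] at hx
    have h : tau'P (e⁻¹ x) = e⁻¹ x := by
      apply_fun e
      simpa using hx
    exact tau'P_fpf _ h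
  have hclos : Subgroup.closure ({e * tauP * e⁻¹, e * tau'P * e⁻¹} : Set (Perm (Fin (2 * k)))) =
      Subgroup.map (MulAut.conj e).toMonoidHom
        (Subgroup.closure ({tauP, tau'P} : Set (Perm (Fin (2 * k))))) := by
    rw [MonoidHom.map_closure, Set.image_pair]
    congr 1
  have htrans : MulAction.IsPretransitive
      (Subgroup.closure {e * tauP * e⁻¹, e * tau'P * e⁻¹}) (Fin (2 * k)) := by
    constructor
    intro x y
    obtain ⟨g, hg⟩ := (tau_transitive (k := k)).exists_smul_eq (e⁻¹ x) (e⁻¹ y)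
    have hg' : (g : Perm (Fin (2 * k))) (e⁻¹ x) = e⁻¹ y := hg
    refine ⟨⟨e * g * e⁻¹, ?_⟩, ?_⟩
    · rw [hclos]
      exact Subgroup.mem_map_of_mem _ g.2
    · show (e * (g : Perm (Fin (2 * k))) * e⁻¹) x = y
      simp only [Equiv.Perm.mul_apply]
      rw [hg']
      simp
  refine ⟨h2, h2', hf, hf', htrans, ?_⟩
  intro j
  rw [seq_of_conj e he0 j.val j.isLt]

/-- The number of ordered pairs `(σ, σ')` of permutations of a set of size `2k`, both of cycle
type `2^k` (fixed-point-free involutions), generating a transitive subgroup, is `(2k−1)!`. -/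
theorem card_transitive_pairs_of_involutions (k : ℕ) (hk : 0 < k) :
    Nat.card {p : Equiv.Perm (Fin (2 * k)) × Equiv.Perm (Fin (2 * k)) //
      p.1.cycleType = Multiset.replicate k 2 ∧
      p.2.cycleType = Multiset.replicate k 2 ∧
      MulAction.IsPretransitive (Subgroup.closure {p.1, p.2}) (Fin (2 * k))} =
    Nat.factorial (2 * k - 1) := by
  classical
  haveI : NeZero (2 * k) := ⟨by omega⟩
  -- reformulate the conditions
  have hcongr : Nat.card {p : Equiv.Perm (Fin (2 * k)) × Equiv.Perm (Fin (2 * k)) //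
      p.1.cycleType = Multiset.replicate k 2 ∧
      p.2.cycleType = Multiset.replicate k 2 ∧
      MulAction.IsPretransitive (Subgroup.closure {p.1, p.2}) (Fin (2 * k))} =
      Nat.card {p : Equiv.Perm (Fin (2 * k)) × Equiv.Perm (Fin (2 * k)) //
      (p.1 * p.1 = 1 ∧ ∀ x, p.1 x ≠ x) ∧
      (p.2 * p.2 = 1 ∧ ∀ x, p.2 x ≠ x) ∧
      MulAction.IsPretransitive (Subgroup.closure {p.1, p.2}) (Fin (2 * k))} := by
    apply Nat.card_congr
    apply Equiv.subtypeEquivRight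
    intro p
    rw [aux_cycleType_iff hk, aux_cycleType_iff hk]
  rw [hcongr, ← card_fix_zero (k := k)]
  apply Nat.card_eq_of_bijective
    (f := fun q => (⟨Classical.choose (mkE_exists q.2.1.1 q.2.2.1.1 q.2.1.2 q.2.2.1.2 q.2.2.2),
      by
        have hspec := Classical.choose_spec
          (mkE_exists q.2.1.1 q.2.2.1.1 q.2.1.2 q.2.2.1.2 q.2.2.2)
        have h0 := hspec.1 0
        exact h0⟩ : {e : Perm (Fin (2 * k)) // e 0 = 0}))
  constructor
  · rintro ⟨⟨σ, σ'⟩, hq⟩ ⟨⟨ρ, ρ'⟩, hr⟩ heq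
    replace heq := congrArg Subtype.val heq
    dsimp only at heq
    set e₁ := Classical.choose (mkE_exists hq.1.1 hq.2.1.1 hq.1.2 hq.2.1.2 hq.2.2) with he₁
    set e₂ := Classical.choose (mkE_exists hr.1.1 hr.2.1.1 hr.1.2 hr.2.1.2 hr.2.2) with he₂
    have hs₁ := Classical.choose_spec (mkE_exists hq.1.1 hq.2.1.1 hq.1.2 hq.2.1.2 hq.2.2)
    have hs₂ := Classical.choose_spec (mkE_exists hr.1.1 hr.2.1.1 hr.1.2 hr.2.1.2 hr.2.2)
    have hc₁ := conj_rel hq.1.1 hq.2.1.1 hs₁.2 e₁ hs₁.1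
    have hc₂ := conj_rel hr.1.1 hr.2.1.1 hs₂.2 e₂ hs₂.1
    rw [← heq] at hc₂
    have hσ : σ = ρ := by
      have h1 : σ * e₁ = ρ * e₁ := hc₁.1.trans hc₂.1.symm
      exact mul_right_cancel h1
    have hσ' : σ' = ρ' := by
      have h1 : σ' * e₁ = ρ' * e₁ := hc₁.2.trans hc₂.2.symm
      exact mul_right_cancel h1
    apply Subtype.ext
    simp [hσ, hσ']
  · rintro ⟨e, he0⟩
    obtain ⟨h2, h2', hf, hf', htrans, hchar⟩ := conj_good e he0
    refine ⟨⟨(e * tauP * e⁻¹, e * tau'P * e⁻¹), ⟨h2, hf⟩, ⟨h2', hf'⟩, htrans⟩, ?_⟩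
    apply Subtype.ext
    show Classical.choose (mkE_exists h2 h2' hf hf' htrans) = e
    have hs := Classical.choose_spec (mkE_exists h2 h2' hf hf' htrans)
    apply Equiv.ext
    intro j
    rw [hs.1 j, hchar j]
end

section
/- For every positive integer k, the number of permutations τ of a set of size 2k all of whose cycles have even length is exactly ((2k)!/(2^k · k!))^2. -/
open Equiv Function

namespace CardPermsAux

/-- A permutation has all cycles even (and no fixed points) iff it admits an
alternating 2-coloring. We use this as the working definition. -/
def AltP {γ : Type*} (τ : Equiv.Perm γ) : Prop :=
  ∃ cl : γ → Bool, ∀ z, cl (τ z) = !cl z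

variable {α : Type*} [Fintype α] [DecidableEq α]

/-- The 3-cycle (a x y), degenerating to the swap (a x) when `y = a`. -/
def cyc (a x y : α) : Equiv.Perm α := (Equiv.swap x y) * (Equiv.swap a y)

theorem cyc_a {a x y : α} (hxa : x ≠ a) (hyx : y ≠ x) : cyc a x y a = x := by
  by_cases hya : y = a
  · subst hya
    simp [cyc, Equiv.swap_self, Equiv.swap_apply_right]
  · rw [cyc, Equiv.Perm.mul_apply, Equiv.swap_apply_left, Equiv.swap_apply_right]

theorem cyc_x {a x y : α} (hxa : x ≠ a) (hyx : y ≠ x) : cyc a x y x = y := by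
  rw [cyc, Equiv.Perm.mul_apply, Equiv.swap_apply_of_ne_of_ne hxa (Ne.symm hyx),
    Equiv.swap_apply_left]

theorem cyc_z {a x y z : α} (hxa : x ≠ a) (hza : z ≠ a) (hzx : z ≠ x) :
    cyc a x y z = if z = y then a else z := by
  by_cases hzy : z = y
  · subst hzy
    rw [if_pos rfl, cyc, Equiv.Perm.mul_apply, Equiv.swap_apply_right,
      Equiv.swap_apply_of_ne_of_ne (Ne.symm hxa) (Ne.symm hza)]
  · rw [if_neg hzy, cyc, Equiv.Perm.mul_apply, Equiv.swap_apply_of_ne_of_ne hza hzy,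
      Equiv.swap_apply_of_ne_of_ne hzx hzy]

theorem bwd_apply_a {a x y : α} (hxa : x ≠ a) (hyx : y ≠ x)
    (σ : Equiv.Perm {z : α // z ≠ a ∧ z ≠ x}) :
    (cyc a x y * Equiv.Perm.ofSubtype σ) a = x := by
  rw [Equiv.Perm.mul_apply, Equiv.Perm.ofSubtype_apply_of_not_mem σ (by simp), cyc_a hxa hyx]

theorem bwd_apply_x {a x y : α} (hxa : x ≠ a) (hyx : y ≠ x)
    (σ : Equiv.Perm {z : α // z ≠ a ∧ z ≠ x}) :
    (cyc a x y * Equiv.Perm.ofSubtype σ) x = y := by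
  rw [Equiv.Perm.mul_apply, Equiv.Perm.ofSubtype_apply_of_not_mem σ (by simp), cyc_x hxa hyx]

theorem bwd_alt {a x y : α} (hxa : x ≠ a) (hyx : y ≠ x)
    (σ : Equiv.Perm {z : α // z ≠ a ∧ z ≠ x}) (hσ : AltP σ) :
    AltP (cyc a x y * Equiv.Perm.ofSubtype σ) := by
  obtain ⟨cl', h'⟩ := hσ
  classical
  set A : Bool := if hya : y = a then true else cl' ⟨y, hya, hyx⟩ with hA
  let cl : α → Bool := fun z =>
    if hza : z = a then A else if hzx : z = x then !A else cl' ⟨z, hza, hzx⟩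
  have cla : cl a = A := by simp [cl]
  have clx : cl x = !A := by simp [cl, hxa]
  have clz : ∀ (z : α) (h1 : z ≠ a) (h2 : z ≠ x), cl z = cl' ⟨z, h1, h2⟩ := by
    intro z h1 h2; simp [cl, h1, h2]
  refine ⟨cl, ?_⟩
  intro z
  by_cases hza : z = a
  · subst hza
    rw [bwd_apply_a hxa hyx, clx, cla]
  · by_cases hzx : z = x
    · subst hzx
      rw [bwd_apply_x hxa hyx, clx, Bool.not_not]
      by_cases hya : y = a
      · subst hya; rw [cla]
      · rw [clz y hya hyx, hA, dif_neg hya]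
    · have hz : z ≠ a ∧ z ≠ x := ⟨hza, hzx⟩
      rw [Equiv.Perm.mul_apply, Equiv.Perm.ofSubtype_apply_of_mem σ hz,
        cyc_z hxa (σ ⟨z, hz⟩).2.1 (σ ⟨z, hz⟩).2.2]
      by_cases hw : ((σ ⟨z, hz⟩ : {z : α // z ≠ a ∧ z ≠ x}) : α) = y
      · rw [if_pos hw, cla, clz z hza hzx]
        have hya : y ≠ a := hw ▸ (σ ⟨z, hz⟩).2.1
        rw [hA, dif_neg hya]
        have hmk : (⟨y, hya, hyx⟩ : {z : α // z ≠ a ∧ z ≠ x}) = σ ⟨z, hz⟩ :=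
          Subtype.ext hw.symm
        rw [hmk]
        exact h' ⟨z, hz⟩
      · rw [if_neg hw, clz _ (σ ⟨z, hz⟩).2.1 (σ ⟨z, hz⟩).2.2, clz z hza hzx]
        rw [Subtype.coe_eta]
        exact h' ⟨z, hz⟩

/-- The inverse of the splice bijection: insert `a` and `x` into a permutation of the rest. -/
def G (a : α)
    (t : Σ x : {x : α // x ≠ a}, {y : α // y ≠ (x : α)} ×
      {σ : Equiv.Perm {z : α // z ≠ a ∧ z ≠ (x : α)} // AltP σ}) :
    {τ : Equiv.Perm α // AltP τ} :=
  ⟨cyc a t.1 t.2.1 * Equiv.Perm.ofSubtype t.2.2.1, bwd_alt t.1.2 t.2.1.2 _ t.2.2.2⟩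

theorem G_bijective (a : α) : Function.Bijective (G a) := by
  constructor
  · rintro ⟨⟨x1, hx1⟩, ⟨y1, hy1⟩, ⟨σ1, hσ1⟩⟩ ⟨⟨x2, hx2⟩, ⟨y2, hy2⟩, ⟨σ2, hσ2⟩⟩ h
    have h' : cyc a x1 y1 * Equiv.Perm.ofSubtype σ1 = cyc a x2 y2 * Equiv.Perm.ofSubtype σ2 :=
      congrArg Subtype.val h
    have ex : x1 = x2 := by
      rw [← bwd_apply_a hx1 hy1 σ1, ← bwd_apply_a hx2 hy2 σ2, h']
    subst ex
    have ey : y1 = y2 := by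
      rw [← bwd_apply_x hx1 hy1 σ1, ← bwd_apply_x hx1 hy2 σ2, h']
    subst ey
    have hc : Equiv.Perm.ofSubtype σ1 = Equiv.Perm.ofSubtype σ2 := by
      have e1 : cyc a x1 y1 = cyc a x1 y1 := rfl
      exact mul_left_cancel h'
    have eσ : σ1 = σ2 := by
      ext w
      have h3 := Equiv.ext_iff.mp hc (w : α)
      rw [Equiv.Perm.ofSubtype_apply_of_mem σ1 w.2, Equiv.Perm.ofSubtype_apply_of_mem σ2 w.2]
        at h3
      exact h3
    subst eσ
    rfl
  · rintro ⟨τ, hτ⟩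
    obtain ⟨cl, hcl⟩ := id hτ
    have hfix : ∀ z, τ z ≠ z := by
      intro z hz
      have := hcl z; rw [hz] at this; simp at this
    have hxa : τ a ≠ a := hfix a
    have hyx : τ (τ a) ≠ τ a := hfix (τ a)
    set x := τ a with hxdef
    set y := τ x with hydef
    set f := (cyc a x y)⁻¹ * τ with hf
    have hfa : f a = a := by
      rw [hf, Equiv.Perm.mul_apply, Equiv.Perm.inv_eq_iff_eq, cyc_a hxa hyx]
    have hfx : f x = x := by
      rw [hf, Equiv.Perm.mul_apply, Equiv.Perm.inv_eq_iff_eq, cyc_x hxa hyx]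
    have hmem : ∀ z, (z ≠ a ∧ z ≠ x) ↔ (f z ≠ a ∧ f z ≠ x) := by
      intro z
      constructor
      · rintro ⟨h1, h2⟩
        exact ⟨fun hh => h1 (f.injective (hh.trans hfa.symm)),
          fun hh => h2 (f.injective (hh.trans hfx.symm))⟩
      · rintro ⟨h1, h2⟩
        constructor
        · rintro rfl; exact h1 hfa
        · rintro rfl; exact h2 hfx
    set σ := f.subtypePerm (p := fun z => z ≠ a ∧ z ≠ x) (fun z => (hmem z).symm) with hσdef
    have hσalt : AltP σ := by
      refine ⟨fun w => cl ↑w, ?_⟩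
      intro w
      show cl (f ↑w) = !cl ↑w
      by_cases hta : τ ↑w = a
      · have hya : y ≠ a := by
          intro hy0
          exact w.2.2 (τ.injective (hta.trans hy0.symm))
        have hcy : cyc a x y y = a := by
          rw [cyc_z hxa hya hyx, if_pos rfl]
        have : f ↑w = y := by
          rw [hf, Equiv.Perm.mul_apply, hta, Equiv.Perm.inv_eq_iff_eq]
          exact hcy.symm
        rw [this]
        have e1 := hcl x
        have e2 := hcl a
        have e3 := hcl ↑w
        rw [hta] at e3
        rw [← hydef] at e1
        rw [← hxdef] at e2
        rw [e1, e2, e3, Bool.not_not]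
      · have htx : τ ↑w ≠ x := fun h => w.2.1 (τ.injective (h.trans hxdef))
        have hty : τ ↑w ≠ y := fun h => w.2.2 (τ.injective (h.trans hydef))
        have hcz : cyc a x y (τ ↑w) = τ ↑w := by
          rw [cyc_z hxa hta htx, if_neg hty]
        have : f ↑w = τ ↑w := by
          rw [hf, Equiv.Perm.mul_apply, Equiv.Perm.inv_eq_iff_eq]
          exact hcz.symm
        rw [this]
        exact hcl ↑w
    refine ⟨⟨⟨x, hxa⟩, ⟨y, hyx⟩, ⟨σ, hσalt⟩⟩, ?_⟩
    apply Subtype.ext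
    show cyc a x y * Equiv.Perm.ofSubtype σ = τ
    have hos : Equiv.Perm.ofSubtype σ = f := by
      apply Equiv.Perm.ofSubtype_subtypePerm
      intro z hz
      constructor
      · rintro rfl; exact hz hfa
      · rintro rfl; exact hz hfx
    rw [hos, hf, mul_inv_cancel_left]

theorem natcard_sigma {ι : Type*} [Fintype ι] (f : ι → Type*) [∀ i, Finite (f i)] :
    Nat.card (Σ i, f i) = ∑ i, Nat.card (f i) := by
  letI := fun i => Fintype.ofFinite (f i)
  simp only [Nat.card_eq_fintype_card]
  exact Fintype.card_sigma

theorem natcard_ne (b : α) : Nat.card {y : α // y ≠ b} = Fintype.card α - 1 := by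
  classical
  rw [Nat.card_eq_fintype_card, Fintype.card_subtype]
  rw [show Finset.univ.filter (fun y : α => y ≠ b) = Finset.univ.erase b from by
    ext z; simp [Finset.mem_erase]]
  rw [Finset.card_erase_of_mem (Finset.mem_univ b), Finset.card_univ]

theorem card_ne_two {a x : α} (hxa : x ≠ a) :
    Fintype.card {z : α // z ≠ a ∧ z ≠ x} = Fintype.card α - 2 := by
  classical
  rw [Fintype.card_subtype]
  rw [show Finset.univ.filter (fun z : α => z ≠ a ∧ z ≠ x)
      = (Finset.univ.erase a).erase x from by
    ext z; simp [Finset.mem_erase]; tauto]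
  rw [Finset.card_erase_of_mem (Finset.mem_erase.mpr ⟨hxa, Finset.mem_univ x⟩),
    Finset.card_erase_of_mem (Finset.mem_univ a), Finset.card_univ]
  omega

theorem two_pow_fact_dvd (k : ℕ) : 2 ^ k * k.factorial ∣ (2 * k).factorial := by
  induction k with
  | zero => simp
  | succ k ih =>
    obtain ⟨c, hc⟩ := ih
    refine ⟨(2 * k + 1) * c, ?_⟩
    rw [show 2 * (k + 1) = (2 * k + 1) + 1 by ring, Nat.factorial_succ, Nat.factorial_succ,
      hc, pow_succ, Nat.factorial_succ]
    ring

theorem D_succ (k : ℕ) :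
    (2 * (k + 1)).factorial / (2 ^ (k + 1) * (k + 1).factorial)
      = (2 * k + 1) * ((2 * k).factorial / (2 ^ k * k.factorial)) := by
  obtain ⟨c, hc⟩ := two_pow_fact_dvd k
  have hpos : 0 < 2 ^ k * k.factorial := by positivity
  have h1 : (2 * k).factorial / (2 ^ k * k.factorial) = c := by
    rw [hc, Nat.mul_div_cancel_left _ hpos]
  have h2 : (2 * (k + 1)).factorial
      = (2 ^ (k + 1) * (k + 1).factorial) * ((2 * k + 1) * c) := by
    rw [show 2 * (k + 1) = (2 * k + 1) + 1 by ring, Nat.factorial_succ, Nat.factorial_succ,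
      hc, pow_succ, Nat.factorial_succ]
    ring
  rw [h1, h2, Nat.mul_div_cancel_left _ (by positivity)]

theorem gen_count : ∀ (k : ℕ) (α : Type) [Fintype α] [DecidableEq α],
    Fintype.card α = 2 * k →
    Nat.card {τ : Equiv.Perm α // AltP τ}
      = ((2 * k).factorial / (2 ^ k * k.factorial)) ^ 2 := by
  intro k
  induction k with
  | zero =>
    intro α _ _ h
    haveI : IsEmpty α := Fintype.card_eq_zero_iff.mp (by simpa using h)
    have h1 : Nat.card {τ : Equiv.Perm α // AltP τ} = 1 := by
      rw [Nat.card_eq_one_iff_unique]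
      constructor
      · constructor
        rintro ⟨τ1, _⟩ ⟨τ2, _⟩
        apply Subtype.ext
        ext z
        exact isEmptyElim z
      · exact ⟨⟨1, ⟨fun _ => true, fun z => isEmptyElim z⟩⟩⟩
    rw [h1]
    norm_num
  | succ k ih =>
    intro α _ _ hcard
    have hpos : 0 < Fintype.card α := by omega
    obtain ⟨a⟩ := Fintype.card_pos_iff.mp hpos
    rw [Nat.card_congr (Equiv.ofBijective (G a) (G_bijective a)).symm, natcard_sigma]
    have hx1 : ∀ x : {x : α // x ≠ a}, Nat.card {y : α // y ≠ (x : α)} = 2 * k + 1 := by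
      intro x
      rw [natcard_ne]
      omega
    have hx2 : ∀ x : {x : α // x ≠ a},
        Nat.card {σ : Equiv.Perm {z : α // z ≠ a ∧ z ≠ (x : α)} // AltP σ}
          = ((2 * k).factorial / (2 ^ k * k.factorial)) ^ 2 := by
      intro x
      apply ih
      rw [card_ne_two x.2]
      omega
    have hsum : ∑ x : {x : α // x ≠ a},
        Nat.card ({y : α // y ≠ (x : α)} ×
          {σ : Equiv.Perm {z : α // z ≠ a ∧ z ≠ (x : α)} // AltP σ})
        = ∑ _x : {x : α // x ≠ a},
            (2 * k + 1) * ((2 * k).factorial / (2 ^ k * k.factorial)) ^ 2 := by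
      refine Finset.sum_congr rfl fun x _ => ?_
      rw [Nat.card_prod, hx1, hx2]
    rw [hsum, Finset.sum_const, Finset.card_univ, smul_eq_mul]
    have hcx : Fintype.card {x : α // x ≠ a} = 2 * k + 1 := by
      rw [← Nat.card_eq_fintype_card, natcard_ne]
      omega
    rw [hcx, D_succ]
    ring

theorem exists_cl (τ : Equiv.Perm α) (hev : ∀ j ∈ τ.cycleType, Even j) :
    ∃ cl : α → Bool, ∀ z ∈ τ.support, cl (τ z) = !cl z := by
  revert hev
  induction τ using Equiv.Perm.cycle_induction_on with
  | base_one =>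
    intro _
    exact ⟨fun _ => true, by simp⟩
  | base_cycles σ hσ =>
    intro hev
    obtain ⟨x, hx, -⟩ := id hσ
    have hn : Even σ.support.card := hev _ (by rw [hσ.cycleType]; simp)
    have ex : ∀ z ∈ σ.support, ∃ i : ℕ, (σ ^ i) x = z := fun z hz =>
      hσ.exists_pow_eq hx (Equiv.Perm.mem_support.mp hz)
    have key : ∀ i j : ℕ, (σ ^ i) x = (σ ^ j) x → i % 2 = j % 2 := by
      have main : ∀ i j : ℕ, i ≤ j → (σ ^ i) x = (σ ^ j) x → i % 2 = j % 2 := by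
        intro i j hij hEq
        have h1 : (σ ^ (j - i)) ((σ ^ i) x) = (σ ^ i) x := by
          rw [← Equiv.Perm.mul_apply, ← pow_add, Nat.sub_add_cancel hij, ← hEq]
        have hx' : σ ((σ ^ i) x) ≠ (σ ^ i) x :=
          Equiv.Perm.mem_support.mp
            (Equiv.Perm.pow_apply_mem_support.mpr (Equiv.Perm.mem_support.mpr hx))
        have h2 : σ ^ (j - i) = 1 := (hσ.pow_eq_one_iff' hx').mpr h1
        have h3 : orderOf σ ∣ j - i := orderOf_dvd_of_pow_eq_one h2
        rw [hσ.orderOf] at h3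
        have h4 : 2 ∣ j - i := dvd_trans hn.two_dvd h3
        omega
      intro i j hEq
      rcases le_total i j with h | h
      · exact main i j h hEq
      · exact (main j i h hEq.symm).symm
    refine ⟨fun z => if hz : z ∈ σ.support then
      decide ((Nat.find (ex z hz)) % 2 = 1) else true, ?_⟩
    intro z hz
    have hz' : σ z ∈ σ.support := Equiv.Perm.apply_mem_support.mpr hz
    beta_reduce
    rw [dif_pos hz', dif_pos hz]
    have h1 : (σ ^ (Nat.find (ex z hz) + 1)) x = σ z := by
      rw [pow_succ', Equiv.Perm.mul_apply, Nat.find_spec (ex z hz)]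
    have h2 := key _ _ ((Nat.find_spec (ex (σ z) hz')).trans h1.symm)
    rw [← decide_not, decide_eq_decide]
    omega
  | induction_disjoint σ π hd hσc ihσ ihπ =>
    intro hev
    obtain ⟨clσ, hclσ⟩ := ihσ (fun j hj => hev j (by
      rw [hd.cycleType_mul]; exact Multiset.mem_add.mpr (Or.inl hj)))
    obtain ⟨clπ, hclπ⟩ := ihπ (fun j hj => hev j (by
      rw [hd.cycleType_mul]; exact Multiset.mem_add.mpr (Or.inr hj)))
    refine ⟨fun z => if z ∈ σ.support then clσ z else clπ z, ?_⟩
    intro z hz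
    rw [hd.support_mul, Finset.mem_union] at hz
    by_cases hzσ : z ∈ σ.support
    · have hzπ : π z = z := by
        rcases hd z with h | h
        · exact absurd h (Equiv.Perm.mem_support.mp hzσ)
        · exact h
      have happ : (σ * π) z = σ z := by rw [Equiv.Perm.mul_apply, hzπ]
      rw [happ]
      have hσz : σ z ∈ σ.support := Equiv.Perm.apply_mem_support.mpr hzσ
      beta_reduce
      rw [if_pos hσz, if_pos hzσ]
      exact hclσ z hzσ
    · have hzπ : z ∈ π.support := hz.resolve_left hzσ
      have h1 : σ (π z) = π z := by
        rcases hd (π z) with h | h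
        · exact h
        · exact absurd (π.injective h) (Equiv.Perm.mem_support.mp hzπ)
      rw [Equiv.Perm.mul_apply, h1]
      have hπβ : π z ∉ σ.support := fun hmem => (Equiv.Perm.mem_support.mp hmem) h1
      beta_reduce
      rw [if_neg hπβ, if_neg hzσ]
      exact hclπ z hzπ

theorem alt_iff (τ : Equiv.Perm α) :
    (Function.fixedPoints ⇑τ = ∅ ∧ ∀ j ∈ τ.cycleType, Even j) ↔ AltP τ := by
  constructor
  · rintro ⟨hfix, hev⟩
    obtain ⟨cl, hcl⟩ := exists_cl τ hev
    have hne : ∀ z : α, τ z ≠ z := by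
      intro z hz
      have hmem : z ∈ Function.fixedPoints ⇑τ := hz
      rw [hfix] at hmem
      exact hmem
    exact ⟨cl, fun z => hcl z (Equiv.Perm.mem_support.mpr (hne z))⟩
  · rintro ⟨cl, hcl⟩
    constructor
    · ext z
      simp only [Set.mem_empty_iff_false, iff_false, Function.mem_fixedPoints]
      intro hz
      have := hcl z
      rw [hz] at this
      simp at this
    · intro j hj
      rw [Equiv.Perm.cycleType_def, Multiset.mem_map] at hj
      obtain ⟨d, hd, hdj⟩ := hj
      rw [Finset.mem_val] at hd
      obtain ⟨hdc, hdτ⟩ := Equiv.Perm.mem_cycleFactorsFinset_iff.mp hd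
      obtain ⟨z0, hz0⟩ := Finset.card_pos.mp
        (lt_of_lt_of_le (by norm_num) hdc.two_le_card_support)
      have hpow : ∀ n : ℕ, (d ^ n) z0 = (τ ^ n) z0 := by
        intro n
        induction n with
        | zero => rfl
        | succ n ihn =>
          rw [pow_succ', pow_succ', Equiv.Perm.mul_apply, Equiv.Perm.mul_apply, ihn,
            ← ihn, hdτ _ (Equiv.Perm.pow_apply_mem_support.mpr hz0), ihn]
      have hjcard : j = d.support.card := by
        rw [← hdj]; simp
      have hdord : d ^ j = 1 := by
        rw [hjcard, ← hdc.orderOf]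
        exact pow_orderOf_eq_one d
      have hτj : (τ ^ j) z0 = z0 := by
        rw [← hpow, hdord]
        rfl
      by_contra hodd
      obtain ⟨m, hm⟩ := Nat.not_even_iff_odd.mp hodd
      have hEven : ∀ (m : ℕ) (z : α), cl ((τ ^ (2 * m)) z) = cl z := by
        intro m
        induction m with
        | zero => intro z; simp
        | succ m ihm =>
          intro z
          rw [show 2 * (m + 1) = 2 * m + 2 by ring, pow_add, Equiv.Perm.mul_apply, ihm,
            pow_two, Equiv.Perm.mul_apply, hcl, hcl, Bool.not_not]
      have hcontr : cl z0 = !cl z0 := by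
        conv_lhs => rw [← hτj, hm]
        rw [pow_succ, Equiv.Perm.mul_apply, hEven, hcl]
      simp at hcontr

end CardPermsAux

/-- The number of permutations of a set of size `2k` all of whose cycles have even length
(in particular with no fixed points) is `((2k)!/(2^k · k!))^2`. -/
theorem card_perms_all_cycles_even (k : ℕ) (hk : 0 < k) :
    Nat.card {τ : Equiv.Perm (Fin (2 * k)) //
      Function.fixedPoints ⇑τ = ∅ ∧ ∀ j ∈ τ.cycleType, Even j} =
    (Nat.factorial (2 * k) / (2 ^ k * Nat.factorial k)) ^ 2 := by
  have h1 : Nat.card {τ : Equiv.Perm (Fin (2 * k)) // CardPermsAux.AltP τ}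
      = ((2 * k).factorial / (2 ^ k * k.factorial)) ^ 2 :=
    CardPermsAux.gen_count k (Fin (2 * k)) (by simp)
  rw [← h1]
  exact Nat.card_congr (Equiv.subtypeEquivRight fun τ => CardPermsAux.alt_iff τ)
end

section
/- Let a finite group G act transitively on a finite set X, and let π₁, π₂ ∈ G have exactly k₁ and k₂ fixed points in X, respectively. If σ ∈ G is chosen uniformly at random, then the probability that π₁ and σ⁻¹π₂σ have a common fixed point in X is at most k₁k₂/|X|. -/
/-!
The event happens exactly when `σ` maps some fixed point `x` of `π₁` to a fixed point `y` of
`π₂`. For each of the `k₁ k₂` pairs `(x, y)`, the elements `σ` with `σ • x = y` form a coset of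
the stabilizer of `x`, which by transitivity has `|G| / |X|` elements; a union bound over the
pairs concludes.
-/

namespace MulAction

variable {G X : Type*} [Group G] [MulAction G X]

theorem mem_fixedBy_conj_iff {g σ : G} {x : X} :
    x ∈ fixedBy X (σ⁻¹ * g * σ) ↔ σ • x ∈ fixedBy X g := by
  simp only [mem_fixedBy, mul_smul, inv_smul_eq_iff]

theorem setOf_fixedBy_inter_conj_nonempty_eq_iUnion (g h : G) :
    {σ : G | (fixedBy X g ∩ fixedBy X (σ⁻¹ * h * σ)).Nonempty} =
      ⋃ p : fixedBy X g × fixedBy X h, {σ | σ • (p.1 : X) = p.2} := by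
  ext σ
  simp only [Set.Nonempty, Set.mem_inter_iff, mem_fixedBy_conj_iff, Set.mem_ofPred_eq,
    Set.mem_iUnion, Prod.exists, Subtype.exists]
  constructor
  · rintro ⟨x, hx, hσx⟩
    exact ⟨x, hx, σ • x, hσx, rfl⟩
  · rintro ⟨x, hx, _, hy, rfl⟩
    exact ⟨x, hx, hy⟩

theorem ncard_setOf_smul_eq_mul_card [IsPretransitive G X] (x y : X) :
    {σ : G | σ • x = y}.ncard * Nat.card X = Nat.card G := by
  obtain ⟨g, rfl⟩ := exists_smul_eq G x y
  have toStabilizer : {σ : G | σ • x = g • x} ≃ stabilizer G x :=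
    { toFun := fun σ => ⟨g⁻¹ * σ, by rw [mem_stabilizer_iff, mul_smul, inv_smul_eq_iff]; exact σ.2⟩
      invFun := fun s => ⟨g * s, by rw [Set.mem_ofPred_eq, mul_smul, mem_stabilizer_iff.1 s.2]⟩
      left_inv := fun σ => by simp
      right_inv := fun s => by simp }
  rw [← Nat.card_coe_set_eq, Nat.card_congr toStabilizer, ← index_stabilizer_of_transitive G x,
    Subgroup.card_mul_index]

theorem ncard_setOf_fixedBy_inter_conj_nonempty_mul_card_le [IsPretransitive G X] [Finite X]
    (g h : G) :
    {σ : G | (fixedBy X g ∩ fixedBy X (σ⁻¹ * h * σ)).Nonempty}.ncard * Nat.card X ≤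
      Nat.card (fixedBy X g) * Nat.card (fixedBy X h) * Nat.card G := by
  have := Fintype.ofFinite (fixedBy X g × fixedBy X h)
  calc _ ≤ (∑ p : fixedBy X g × fixedBy X h, {σ : G | σ • (p.1 : X) = p.2}.ncard) *
          Nat.card X := by
        rw [setOf_fixedBy_inter_conj_nonempty_eq_iUnion]
        gcongr
        exact Set.ncard_iUnion_le_of_fintype _
    _ = Nat.card (fixedBy X g) * Nat.card (fixedBy X h) * Nat.card G := by
        simp only [Finset.sum_mul, ncard_setOf_smul_eq_mul_card, Finset.sum_const,
          Finset.card_univ, smul_eq_mul, ← Nat.card_eq_fintype_card, Nat.card_prod]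

end MulAction

/-- If a finite group `G` acts transitively on a finite set `X`, `π₁` has `k₁` fixed points and
`π₂` has `k₂` fixed points, then for uniformly random `σ ∈ G` the probability that `π₁` and
`σ⁻¹ π₂ σ` have a common fixed point is at most `k₁ k₂ / |X|`. -/
theorem prob_common_fixed_point_le (G X : Type*) [Group G] [Finite G] [Finite X]
    [MulAction G X] [MulAction.IsPretransitive G X] (π₁ π₂ : G) (k₁ k₂ : ℕ)
    (h₁ : Nat.card (MulAction.fixedBy X π₁) = k₁)
    (h₂ : Nat.card (MulAction.fixedBy X π₂) = k₂) :
    (Nat.card {σ : G //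
        (MulAction.fixedBy X π₁ ∩ MulAction.fixedBy X (σ⁻¹ * π₂ * σ)).Nonempty} : ℝ) /
      (Nat.card G : ℝ) ≤ (k₁ : ℝ) * (k₂ : ℝ) / (Nat.card X : ℝ) := by
  obtain hX | hX := isEmpty_or_nonempty X
  · simp [Set.Nonempty]
  have hcount := MulAction.ncard_setOf_fixedBy_inter_conj_nonempty_mul_card_le (X := X) π₁ π₂
  rw [h₁, h₂, ← Nat.card_coe_set_eq] at hcount
  rw [div_le_div_iff₀ (Nat.cast_pos.2 Nat.card_pos) (Nat.cast_pos.2 Nat.card_pos)]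
  exact_mod_cast hcount
end

section
/- Let π, π' ∈ S_n and 1 ≤ k ≤ n. Let f_k be the number of k-element subsets of {1,…,n} invariant under π, and f'_k the number of k-element subsets invariant under π'. If σ ∈ S_n is chosen uniformly at random, then the expected number of k-element subsets of {1,…,n} that are invariant under both π and σ⁻¹π'σ equals f_k · f'_k / binomial(n, k). -/
open Finset Equiv

section Aux

variable {α : Type*} [Fintype α] [DecidableEq α]

private lemma image_eq_iff' (σ : Perm α) (s t : Finset α) :
    s.image σ = t ↔ ∀ a, a ∈ s ↔ σ a ∈ t := by
  constructor
  · rintro rfl a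
    constructor
    · exact fun h => Finset.mem_image_of_mem σ h
    · rintro h
      obtain ⟨b, hb, hba⟩ := Finset.mem_image.1 h
      rwa [← σ.injective hba]
  · intro h
    ext b
    rw [Finset.mem_image]
    constructor
    · rintro ⟨a, ha, rfl⟩; exact (h a).1 ha
    · intro hb
      exact ⟨σ.symm b, (h _).2 (by simpa using hb), by simp⟩

private def permBetweenEquiv (s t : Finset α) :
    {σ : Perm α // ∀ a, a ∈ s ↔ σ a ∈ t} ≃
      ({a // a ∈ s} ≃ {a // a ∈ t}) × ({a // a ∉ s} ≃ {a // a ∉ t}) where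
  toFun σ := ⟨σ.1.subtypeEquiv σ.2, σ.1.subtypeEquiv fun a => not_congr (σ.2 a)⟩
  invFun ef := ⟨(Equiv.sumCompl (· ∈ s)).symm.trans ((ef.1.sumCongr ef.2).trans
      (Equiv.sumCompl (· ∈ t))), by
    intro a
    by_cases h : a ∈ s
    · simp [Equiv.sumCompl_symm_apply_of_pos h, h, (ef.1 ⟨a, h⟩).2]
    · simp only [Equiv.trans_apply, Equiv.sumCompl_symm_apply_of_neg h,
        Equiv.sumCongr_apply, Sum.map_inr, Equiv.sumCompl_apply_inr]
      exact iff_of_false h (ef.2 ⟨a, h⟩).2⟩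
  left_inv σ := by
    ext a
    by_cases h : a ∈ s
    · simp [Equiv.sumCompl_symm_apply_of_pos h]
    · simp [Equiv.sumCompl_symm_apply_of_neg h]
  right_inv ef := by
    ext a
    · simp [Equiv.sumCompl_symm_apply_of_pos a.2]
    · simp [Equiv.sumCompl_symm_apply_of_neg a.2]

private lemma card_perm_image_eq (s t : Finset α) (h : s.card = t.card) :
    (Finset.univ.filter fun σ : Perm α => s.image σ = t).card =
      Nat.factorial s.card * Nat.factorial (Fintype.card α - s.card) := by
  classical
  rw [← Fintype.card_subtype]
  have e1 : {σ : Perm α // s.image σ = t} ≃ {σ : Perm α // ∀ a, a ∈ s ↔ σ a ∈ t} :=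
    Equiv.subtypeEquivRight fun σ => image_eq_iff' σ s t
  rw [Fintype.card_congr (e1.trans (permBetweenEquiv s t)), Fintype.card_prod]
  have hst : Fintype.card {a // a ∈ s} = Fintype.card {a // a ∈ t} := by
    simp [Fintype.card_coe, h]
  have hst' : Fintype.card {a // a ∉ s} = Fintype.card {a // a ∉ t} := by
    have h1 := Fintype.card_subtype_compl (fun a => a ∈ s)
    have h2 := Fintype.card_subtype_compl (fun a => a ∈ t)
    rw [h1, h2, hst]
  rw [Fintype.card_equiv (Fintype.equivOfCardEq hst),
    Fintype.card_equiv (Fintype.equivOfCardEq hst'),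
    Fintype.card_coe, Fintype.card_subtype_compl, Fintype.card_coe]

end Aux

/-- If `f_k` (resp. `f'_k`) is the number of `k`-subsets of `{1, …, n}` invariant under `π`
(resp. `π'`), then the expected number of `k`-subsets invariant under both `π` and `σ⁻¹ π' σ`,
for uniformly random `σ ∈ S_n`, equals `f_k f'_k / C(n, k)`. -/
theorem expected_common_invariant_subsets (n k : ℕ) (hk1 : 1 ≤ k) (hkn : k ≤ n)
    (π π' : Equiv.Perm (Fin n)) :
    (∑ σ : Equiv.Perm (Fin n),
        (Nat.card {s : Finset (Fin n) //
          s.card = k ∧ (∀ a ∈ s, π a ∈ s) ∧ ∀ a ∈ s, (σ⁻¹ * π' * σ) a ∈ s} : ℝ)) /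
      (Nat.card (Equiv.Perm (Fin n)) : ℝ) =
    (Nat.card {s : Finset (Fin n) // s.card = k ∧ ∀ a ∈ s, π a ∈ s} : ℝ) *
      (Nat.card {s : Finset (Fin n) // s.card = k ∧ ∀ a ∈ s, π' a ∈ s} : ℝ) /
      (n.choose k : ℝ) := by
  classical
  set A : Finset (Finset (Fin n)) :=
    Finset.univ.filter (fun s => s.card = k ∧ ∀ a ∈ s, π a ∈ s) with hA
  set B : Finset (Finset (Fin n)) :=
    Finset.univ.filter (fun s => s.card = k ∧ ∀ a ∈ s, π' a ∈ s) with hB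
  -- key pointwise equivalence
  have key : ∀ σ : Equiv.Perm (Fin n), ∀ s : Finset (Fin n),
      (s.card = k ∧ (∀ a ∈ s, π a ∈ s) ∧ ∀ a ∈ s, (σ⁻¹ * π' * σ) a ∈ s) ↔
      ((s.card = k ∧ ∀ a ∈ s, π a ∈ s) ∧ s.image σ ∈ B) := by
    intro σ s
    have himg : ∀ a : Fin n, σ a ∈ s.image σ ↔ a ∈ s := by
      intro a
      constructor
      · intro h
        obtain ⟨b, hb, hba⟩ := Finset.mem_image.1 h
        rwa [← σ.injective hba]
      · exact fun h => Finset.mem_image_of_mem σ h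
    have hcard : (s.image σ).card = s.card := Finset.card_image_of_injective s σ.injective
    constructor
    · rintro ⟨h1, h2, h3⟩
      refine ⟨⟨h1, h2⟩, ?_⟩
      rw [hB, Finset.mem_filter]
      refine ⟨Finset.mem_univ _, by rw [hcard, h1], ?_⟩
      intro b hb
      obtain ⟨a, ha, rfl⟩ := Finset.mem_image.1 hb
      have := h3 a ha
      simp only [Equiv.Perm.mul_apply] at this ⊢
      have : σ (σ⁻¹ (π' (σ a))) ∈ s.image σ := Finset.mem_image_of_mem σ this
      simpa using this
    · rintro ⟨⟨h1, h2⟩, hmem⟩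
      rw [hB, Finset.mem_filter] at hmem
      refine ⟨h1, h2, ?_⟩
      intro a ha
      have hb : π' (σ a) ∈ s.image σ := hmem.2.2 _ (Finset.mem_image_of_mem σ ha)
      have : σ ((σ⁻¹ * π' * σ) a) ∈ s.image σ := by
        simpa [Equiv.Perm.mul_apply] using hb
      exact (himg _).1 this
  -- compute each summand
  have hsum : ∀ σ : Equiv.Perm (Fin n),
      Nat.card {s : Finset (Fin n) //
          s.card = k ∧ (∀ a ∈ s, π a ∈ s) ∧ ∀ a ∈ s, (σ⁻¹ * π' * σ) a ∈ s} =
      (A.filter (fun s => s.image σ ∈ B)).card := by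
    intro σ
    rw [Nat.card_eq_fintype_card, Fintype.card_subtype, hA, Finset.filter_filter]
    congr 1
    apply Finset.filter_congr
    intro s _
    exact (key σ s).trans (by tauto)
  -- the natural-number double count
  have hnat : ∑ σ : Equiv.Perm (Fin n), (A.filter (fun s => s.image σ ∈ B)).card =
      A.card * (B.card * (Nat.factorial k * Nat.factorial (n - k))) := by
    have swap : ∑ σ : Equiv.Perm (Fin n), (A.filter (fun s => s.image σ ∈ B)).card =
        ∑ s ∈ A, (Finset.univ.filter (fun σ : Equiv.Perm (Fin n) => s.image σ ∈ B)).card := by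
      simp only [Finset.card_filter]
      rw [Finset.sum_comm' (s := Finset.univ) (t := fun _ => A) (t' := A)
        (s' := fun _ => Finset.univ) (by simp)]
    rw [swap]
    rw [Finset.sum_congr rfl (fun s hs => ?_), Finset.sum_const, smul_eq_mul]
    have hsA : s.card = k := (Finset.mem_filter.1 hs).2.1
    have fib : (Finset.univ.filter (fun σ : Equiv.Perm (Fin n) => s.image σ ∈ B)).card =
        ∑ t ∈ B, ((Finset.univ.filter (fun σ : Equiv.Perm (Fin n) => s.image σ ∈ B)).filter
          (fun σ : Equiv.Perm (Fin n) => s.image σ = t)).card := by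
      exact Finset.card_eq_sum_card_fiberwise
        (f := fun σ : Equiv.Perm (Fin n) => s.image σ)
        (fun σ hσ => (Finset.mem_filter.1 hσ).2)
    rw [fib]
    rw [Finset.sum_congr rfl (fun t ht => ?_), Finset.sum_const, smul_eq_mul]
    have htB : t.card = k := (Finset.mem_filter.1 ht).2.1
    rw [Finset.filter_filter]
    have : ∀ σ : Equiv.Perm (Fin n), (s.image σ ∈ B ∧ s.image σ = t) ↔ s.image σ = t := by
      intro σ; constructor
      · exact fun h => h.2
      · intro h; exact ⟨h ▸ ht, h⟩
    rw [Finset.filter_congr (fun σ _ => this σ)]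
    rw [card_perm_image_eq s t (by rw [hsA, htB]), hsA, Fintype.card_fin]
  -- put things together over ℝ
  have hNA : (Nat.card {s : Finset (Fin n) // s.card = k ∧ ∀ a ∈ s, π a ∈ s}) = A.card := by
    rw [Nat.card_eq_fintype_card, Fintype.card_subtype]
  have hNB : (Nat.card {s : Finset (Fin n) // s.card = k ∧ ∀ a ∈ s, π' a ∈ s}) = B.card := by
    rw [Nat.card_eq_fintype_card, Fintype.card_subtype]
  have hNP : (Nat.card (Equiv.Perm (Fin n))) = Nat.factorial n := by
    rw [Nat.card_eq_fintype_card, Fintype.card_perm, Fintype.card_fin]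
  have hLHS : (∑ σ : Equiv.Perm (Fin n),
        (Nat.card {s : Finset (Fin n) //
          s.card = k ∧ (∀ a ∈ s, π a ∈ s) ∧ ∀ a ∈ s, (σ⁻¹ * π' * σ) a ∈ s} : ℝ)) =
      (A.card : ℝ) * B.card * (Nat.factorial k * Nat.factorial (n - k)) := by
    rw [← Nat.cast_sum, Finset.sum_congr rfl (fun σ _ => hsum σ), hnat]
    push_cast
    ring
  rw [hLHS, hNA, hNB, hNP]
  have hfactN : n.choose k * (Nat.factorial k * Nat.factorial (n - k)) =
      Nat.factorial n := by
    rw [← mul_assoc]; exact Nat.choose_mul_factorial_mul_factorial hkn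
  have hfact : (n.choose k : ℝ) * (Nat.factorial k * Nat.factorial (n - k)) =
      Nat.factorial n := by exact_mod_cast hfactN
  have hc0 : (n.choose k : ℝ) ≠ 0 := by
    exact_mod_cast Nat.choose_pos hkn |>.ne'
  have hf0 : (Nat.factorial n : ℝ) ≠ 0 := by
    exact_mod_cast (Nat.factorial_pos n).ne'
  field_simp
  linear_combination ((A.card : ℝ) * B.card) * hfact
end

section
/- Let n, k, m be positive integers with n = mk and k ≥ 1, and let X_k be the set of all partitions of {1,…,n} into k blocks each of size m. If π ∈ S_n has exactly c cycles in its cycle decomposition (fixed points counted), then the number of partitions in X_k preserved by π (i.e., partitions whose set of blocks is permuted by π) is at most k^c. -/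
section Aux

variable {n k : ℕ}

/-- The part containing `x`, as an element of the subtype of parts. -/
noncomputable def auxPart (P : Finpartition (Finset.univ : Finset (Fin n))) (x : Fin n) :
    {B // B ∈ P.parts} :=
  ⟨P.part x, P.part_mem.mpr (Finset.mem_univ x)⟩

/-- The map sending a part to its image under `π`. -/
def auxImg (π : Equiv.Perm (Fin n)) (P : Finpartition (Finset.univ : Finset (Fin n)))
    (hB : ∀ B ∈ P.parts, B.image π ∈ P.parts) :
    {B // B ∈ P.parts} → {B // B ∈ P.parts} :=
  fun B => ⟨B.1.image π, hB B.1 B.2⟩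

lemma auxImg_inj (π : Equiv.Perm (Fin n)) (P : Finpartition (Finset.univ : Finset (Fin n)))
    (hB : ∀ B ∈ P.parts, B.image π ∈ P.parts) :
    Function.Injective (auxImg π P hB) := by
  intro B B' h
  exact Subtype.ext (Finset.image_injective π.injective (Subtype.ext_iff.mp h))

/-- The labelling of points by the label of their part. -/
noncomputable def auxLbl (P : Finpartition (Finset.univ : Finset (Fin n)))
    (e : {B // B ∈ P.parts} ≃ Fin k) (x : Fin n) : Fin k :=
  e (auxPart P x)

/-- The permutation induced by `π` on labels of parts. -/
noncomputable def auxSigma (π : Equiv.Perm (Fin n))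
    (P : Finpartition (Finset.univ : Finset (Fin n)))
    (hB : ∀ B ∈ P.parts, B.image π ∈ P.parts) (e : {B // B ∈ P.parts} ≃ Fin k) :
    Equiv.Perm (Fin k) :=
  e.symm.trans ((Equiv.ofBijective _
    (Finite.injective_iff_bijective.mp (auxImg_inj π P hB))).trans e)

lemma auxPart_apply (π : Equiv.Perm (Fin n)) (P : Finpartition (Finset.univ : Finset (Fin n)))
    (hB : ∀ B ∈ P.parts, B.image π ∈ P.parts) (x : Fin n) :
    (auxPart P (π x)).1 = ((auxPart P x).1).image π := by
  refine P.part_eq_of_mem (hB _ (P.part_mem.mpr (Finset.mem_univ x))) ?_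
  exact Finset.mem_image_of_mem π (P.mem_part (Finset.mem_univ x))

lemma auxStep (π : Equiv.Perm (Fin n)) (P : Finpartition (Finset.univ : Finset (Fin n)))
    (hB : ∀ B ∈ P.parts, B.image π ∈ P.parts) (e : {B // B ∈ P.parts} ≃ Fin k) (x : Fin n) :
    auxLbl P e (π x) = auxSigma π P hB e (auxLbl P e x) := by
  unfold auxSigma auxLbl
  simp only [Equiv.trans_apply, Equiv.symm_apply_apply, Equiv.ofBijective_apply]
  congr 1
  exact Subtype.ext (auxPart_apply π P hB x)

lemma auxPow (π : Equiv.Perm (Fin n)) (P : Finpartition (Finset.univ : Finset (Fin n)))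
    (hB : ∀ B ∈ P.parts, B.image π ∈ P.parts) (e : {B // B ∈ P.parts} ≃ Fin k) (t : ℕ) :
    ∀ x : Fin n, auxLbl P e ((π ^ t) x) = ((auxSigma π P hB e) ^ t) (auxLbl P e x) := by
  induction t with
  | zero => intro x; simp
  | succ t ih =>
      intro x
      rw [pow_succ', pow_succ']
      simp only [Equiv.Perm.mul_apply]
      rw [auxStep π P hB e ((π ^ t) x), ih x]

lemma auxLbl_eq_iff (P : Finpartition (Finset.univ : Finset (Fin n)))
    (e : {B // B ∈ P.parts} ≃ Fin k) (x a : Fin n) :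
    auxLbl P e x = auxLbl P e a ↔ x ∈ P.part a := by
  rw [P.mem_part_iff_part_eq_part (Finset.mem_univ x) (Finset.mem_univ a)]
  unfold auxLbl auxPart
  rw [e.apply_eq_iff_eq, Subtype.ext_iff]

/-- If two invariant partitions have the same labelling function, they are equal. -/
lemma auxEqOfLbl (P P' : Finpartition (Finset.univ : Finset (Fin n)))
    (e : {B // B ∈ P.parts} ≃ Fin k) (e' : {B // B ∈ P'.parts} ≃ Fin k)
    (h : ∀ x, auxLbl P e x = auxLbl P' e' x) : P = P' := by
  have key : ∀ (Q Q' : Finpartition (Finset.univ : Finset (Fin n)))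
      (f : {B // B ∈ Q.parts} ≃ Fin k) (f' : {B // B ∈ Q'.parts} ≃ Fin k),
      (∀ x, auxLbl Q f x = auxLbl Q' f' x) → Q.parts ⊆ Q'.parts := by
    intro Q Q' f f' hh B hBmem
    obtain ⟨a, ha⟩ := Q.nonempty_of_mem_parts hBmem
    have h1 : B = Q.part a := (Q.part_eq_of_mem hBmem ha).symm
    have h2 : Q.part a = Q'.part a := by
      ext x
      rw [← auxLbl_eq_iff Q f x a, ← auxLbl_eq_iff Q' f' x a, hh x, hh a]
    rw [h1, h2]
    exact Q'.part_mem.mpr (Finset.mem_univ a)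
  ext B
  constructor
  · intro hBm; exact key P P' e e' h hBm
  · intro hBm; exact key P' P e' e (fun x => (h x).symm) hBm

end Aux

/-- If `n = mk` and `π ∈ S_n` has `c` cycles, then the number of partitions of `{1, …, n}` into
`k` blocks of size `m` preserved by `π` is at most `k^c`. -/
theorem card_invariant_partitions_le (n m k : ℕ) (hm : 0 < m) (hk : 0 < k) (hn : n = m * k)
    (π : Equiv.Perm (Fin n)) (c : ℕ) (hc : numCycles π = c) :
    Nat.card {P : Finpartition (Finset.univ : Finset (Fin n)) //
      P.parts.card = k ∧ (∀ B ∈ P.parts, B.card = m) ∧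
      ∀ B ∈ P.parts, B.image π ∈ P.parts} ≤ k ^ c := by
  classical
  set S := {P : Finpartition (Finset.univ : Finset (Fin n)) //
      P.parts.card = k ∧ (∀ B ∈ P.parts, B.card = m) ∧
      ∀ B ∈ P.parts, B.image π ∈ P.parts} with hS
  -- the set of cycle representatives
  have hsupne : ∀ g ∈ π.cycleFactorsFinset, g.support.Nonempty := by
    intro g hg
    obtain ⟨x, hx, -⟩ := (Equiv.Perm.mem_cycleFactorsFinset_iff.mp hg).1
    exact ⟨x, Equiv.Perm.mem_support.mpr hx⟩
  let rep : {g // g ∈ π.cycleFactorsFinset} → Fin n :=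
    fun g => g.1.support.min' (hsupne g.1 g.2)
  have hrep_mem : ∀ g, rep g ∈ g.1.support := fun g => Finset.min'_mem _ _
  let Fx : Finset (Fin n) := Finset.univ.filter (fun x => π x = x)
  let R : Finset (Fin n) := (π.cycleFactorsFinset.attach.image rep) ∪ Fx
  -- cardinality of R
  have hrep_inj : Function.Injective rep := by
    intro g g' hgg
    have h1 : g.1 = π.cycleOf (rep g) :=
      Equiv.Perm.cycle_is_cycleOf (hrep_mem g) g.2
    have h2 : g'.1 = π.cycleOf (rep g') :=
      Equiv.Perm.cycle_is_cycleOf (hrep_mem g') g'.2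
    exact Subtype.ext (by rw [h1, h2, hgg])
  have hnotfix : ∀ g x, g ∈ π.cycleFactorsFinset → x ∈ g.support → π x ≠ x := by
    intro g x hg hx
    have := (Equiv.Perm.mem_cycleFactorsFinset_iff.mp hg).2 x hx
    rw [← this]
    exact Equiv.Perm.mem_support.mp hx
  have hdisj : Disjoint (π.cycleFactorsFinset.attach.image rep) Fx := by
    rw [Finset.disjoint_left]
    rintro x hx hxF
    obtain ⟨g, hg, rfl⟩ := Finset.mem_image.mp hx
    exact hnotfix g.1 (rep g) g.2 (hrep_mem g) (Finset.mem_filter.mp hxF).2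
  have hfixcard : Nat.card (Function.fixedPoints ⇑π) = Fx.card := by
    rw [Nat.card_coe_set_eq, Set.ncard_eq_toFinset_card']
    congr 1
    ext x
    simp [Function.fixedPoints, Function.IsFixedPt, Fx]
    exact Set.mem_toFinset
  have hRcard : R.card = c := by
    rw [← hc]
    unfold numCycles
    rw [Finset.card_union_of_disjoint hdisj,
      Finset.card_image_of_injective _ hrep_inj, Finset.card_attach, hfixcard]
    congr 1
    rw [Equiv.Perm.cycleType_def, Multiset.card_map]
    rfl
  -- coverage
  have hcover : ∀ x : Fin n, ∃ r ∈ R, ∃ t : ℕ, (π ^ t) r = x := by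
    intro x
    by_cases hx : π x = x
    · exact ⟨x, Finset.mem_union_right _ (Finset.mem_filter.mpr ⟨Finset.mem_univ x, hx⟩),
        0, rfl⟩
    · have hxs : x ∈ π.support := Equiv.Perm.mem_support.mpr hx
      have hg : π.cycleOf x ∈ π.cycleFactorsFinset :=
        Equiv.Perm.cycleOf_mem_cycleFactorsFinset_iff.mpr hxs
      set g : {g // g ∈ π.cycleFactorsFinset} := ⟨π.cycleOf x, hg⟩ with hgdef
      have hrs : rep g ∈ (π.cycleOf x).support := hrep_mem g
      have hsc : π.SameCycle (rep g) x :=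
        (Equiv.Perm.mem_support_cycleOf_iff.mp hrs).1.symm
      obtain ⟨t, _, ht⟩ := hsc.exists_pow_eq'
      exact ⟨rep g, Finset.mem_union_left _
        (Finset.mem_image.mpr ⟨g, Finset.mem_attach _ _, rfl⟩), t, ht⟩
  -- the injection
  let eOf : ∀ P : S, {B // B ∈ P.1.parts} ≃ Fin k :=
    fun P => P.1.parts.equivFinOfCardEq P.2.1
  let F : S × Equiv.Perm (Fin k) → Equiv.Perm (Fin k) × ({r // r ∈ R} → Fin k) :=
    fun Pτ => (auxSigma π Pτ.1.1 Pτ.1.2.2.2 ((eOf Pτ.1).trans Pτ.2),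
      fun r => auxLbl Pτ.1.1 ((eOf Pτ.1).trans Pτ.2) r.1)
  have hFinj : Function.Injective F := by
    rintro ⟨P, τ⟩ ⟨P', τ'⟩ hF
    have hσ : auxSigma π P.1 P.2.2.2 ((eOf P).trans τ)
        = auxSigma π P'.1 P'.2.2.2 ((eOf P').trans τ') := congrArg Prod.fst hF
    have hf : ∀ r : {r // r ∈ R}, auxLbl P.1 ((eOf P).trans τ) r.1
        = auxLbl P'.1 ((eOf P').trans τ') r.1 := fun r =>
      congrFun (congrArg Prod.snd hF) r
    have hlbl : ∀ x, auxLbl P.1 ((eOf P).trans τ) x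
        = auxLbl P'.1 ((eOf P').trans τ') x := by
      intro x
      obtain ⟨r, hr, t, rfl⟩ := hcover x
      rw [auxPow π P.1 P.2.2.2 ((eOf P).trans τ) t r,
        auxPow π P'.1 P'.2.2.2 ((eOf P').trans τ') t r,
        hf ⟨r, hr⟩, hσ]
    have hPP : P.1 = P'.1 := auxEqOfLbl P.1 P'.1 ((eOf P).trans τ) ((eOf P').trans τ') hlbl
    have hPP' : P = P' := Subtype.ext hPP
    subst hPP'
    have hco : ∀ j, τ' ((Equiv.symm τ) j) = j := by
      intro j
      set B := ((eOf P).symm (τ.symm j)) with hBdef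
      obtain ⟨a, ha⟩ := P.1.nonempty_of_mem_parts B.2
      have hBa : auxPart P.1 a = B :=
        Subtype.ext (P.1.part_eq_of_mem B.2 ha)
      have h1 : auxLbl P.1 ((eOf P).trans τ) a = τ (eOf P B) := by
        unfold auxLbl; rw [hBa]; rfl
      have h2 : auxLbl P.1 ((eOf P).trans τ') a = τ' (eOf P B) := by
        unfold auxLbl; rw [hBa]; rfl
      have h3 := hlbl a
      rw [h1, h2] at h3
      have hj : eOf P B = τ.symm j := by rw [hBdef]; simp
      rw [hj, Equiv.apply_symm_apply] at h3
      exact h3.symm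
    have hττ : τ = τ' := by
      apply Equiv.ext
      intro i
      have := hco (τ i)
      rw [Equiv.symm_apply_apply] at this
      exact this.symm
    rw [hττ]
  have hcard := Nat.card_le_card_of_injective F hFinj
  rw [Nat.card_prod, Nat.card_prod] at hcard
  have h1 : Nat.card (Equiv.Perm (Fin k)) = Nat.factorial k := by
    rw [Nat.card_eq_fintype_card, Fintype.card_perm, Fintype.card_fin]
  have h2 : Nat.card ({r // r ∈ R} → Fin k) = k ^ c := by
    simp only [Nat.card_eq_fintype_card, Fintype.card_fun, Fintype.card_coe, Fintype.card_fin,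
      hRcard]
  rw [h1, h2] at hcard
  have hfac : 0 < Nat.factorial k := Nat.factorial_pos k
  have hfin : Nat.card S * Nat.factorial k ≤ k ^ c * Nat.factorial k := by
    calc Nat.card S * Nat.factorial k ≤ Nat.factorial k * k ^ c := hcard
    _ = k ^ c * Nat.factorial k := Nat.mul_comm _ _
  exact Nat.le_of_mul_le_mul_right hfin hfac
end
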